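/- arXiv:math/9907208 — 2 statements merged into one kernel-verified Lean document; each statement's English description precedes it below -/
import Mathlib

section
/- Let Q = ℝⁿ × (0,∞), let L be a nondivergence parabolic operator with ellipticity constant ν, let Y = (y,0) ∈ ∂_pQ and r > 0, and let u be a function continuous on cl(Q_{2r}(Y)) and bounded there, solving Lu = 0 in Q_{2r}(Y) and equal to 0 at every point of Δ_{2r}(Y). Then there is a constant θ = θ(n,ν) ∈ (0,1) such that the positive and negative parts u^± = max(±u, 0) satisfy sup over Q_r(Y) of u^± ≤ θ · sup over Q_{2r}(Y) of u^±. -/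
open MeasureTheory Set Metric Filter

noncomputable section

/-- Euclidean space `ℝⁿ`. -/
abbrev E (n : ℕ) : Type := EuclideanSpace ℝ (Fin n)

/-- Second spatial partial derivative `D_i D_j u` at a space-time point `X`. -/
def D2 {n : ℕ} (u : E n × ℝ → ℝ) (X : E n × ℝ) (i j : Fin n) : ℝ :=
  fderiv ℝ (fun x => fderiv ℝ (fun x' => u (x', X.2)) x (EuclideanSpace.single j 1))
    X.1 (EuclideanSpace.single i 1)

/-- Time derivative `D_t u` at a space-time point `X`. -/
def Dt {n : ℕ} (u : E n × ℝ → ℝ) (X : E n × ℝ) : ℝ :=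
  deriv (fun t => u (X.1, t)) X.2

/-- The value `Lu(X)` of the nondivergence parabolic operator with coefficients `a`. -/
def LVal {n : ℕ} (a : E n × ℝ → Fin n → Fin n → ℝ) (u : E n × ℝ → ℝ) (X : E n × ℝ) : ℝ :=
  (∑ i, ∑ j, a X i j * D2 u X i j) - Dt u X

/-- `u` is C² in `x` and C¹ in `t` at every point of `V`. -/
def ParabolicSmoothOn {n : ℕ} (u : E n × ℝ → ℝ) (V : Set (E n × ℝ)) : Prop :=
  ∀ X ∈ V, ContDiffAt ℝ 2 (fun x => u (x, X.2)) X.1 ∧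
    DifferentiableAt ℝ (fun t => u (X.1, t)) X.2

/-- `u` solves `Lu = 0` pointwise in `V` (being C² in `x`, C¹ in `t` there). -/
def SolvesL {n : ℕ} (a : E n × ℝ → Fin n → Fin n → ℝ) (u : E n × ℝ → ℝ)
    (V : Set (E n × ℝ)) : Prop :=
  ParabolicSmoothOn u V ∧ ∀ X ∈ V, LVal a u X = 0

/-- `a` is a smooth coefficient matrix on `S`, uniformly elliptic with constant `ν`
and with entries bounded by `ν⁻¹`. -/
def IsParabolicCoeff {n : ℕ} (ν : ℝ) (a : E n × ℝ → Fin n → Fin n → ℝ)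
    (S : Set (E n × ℝ)) : Prop :=
  (∀ i j, ContDiffOn ℝ (⊤ : ℕ∞) (fun X => a X i j) S) ∧
  ∀ X ∈ S, (∀ ξ : Fin n → ℝ, ν * ∑ i, ξ i ^ 2 ≤ ∑ i, ∑ j, a X i j * ξ i * ξ j) ∧
    ∀ i j, |a X i j| ≤ ν⁻¹

/-- The cylinder `Ω × (t₀, ∞)`. -/
def CylFrom {n : ℕ} (Ω : Set (E n)) (t₀ : ℝ) : Set (E n × ℝ) := Ω ×ˢ Ioi t₀

/-- The cylinder `Q = Ω × (0, ∞)`. -/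
def Cyl {n : ℕ} (Ω : Set (E n)) : Set (E n × ℝ) := CylFrom Ω 0

/-- Parabolic boundary of the cylinder `Ω × (t₀, ∞)`:
`(∂Ω × (t₀,∞)) ∪ (cl(Ω) × {t₀})`. -/
def pBFrom {n : ℕ} (Ω : Set (E n)) (t₀ : ℝ) : Set (E n × ℝ) :=
  (frontier Ω ×ˢ Ioi t₀) ∪ (closure Ω ×ˢ {t₀})

/-- Parabolic boundary of `Ω × (0, ∞)`. -/
def pB {n : ℕ} (Ω : Set (E n)) : Set (E n × ℝ) := pBFrom Ω 0

/-- The cylinder `C_{R,r}(Y) = B_R(y) × (s - r², s + r²)`. -/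
def CRr {n : ℕ} (Y : E n × ℝ) (R r : ℝ) : Set (E n × ℝ) :=
  ball Y.1 R ×ˢ Ioo (Y.2 - r ^ 2) (Y.2 + r ^ 2)

/-- The standard cylinder `C_r(Y) = B_r(y) × (s - r², s + r²)`. -/
def Cr {n : ℕ} (Y : E n × ℝ) (r : ℝ) : Set (E n × ℝ) := CRr Y r r

/-- `ω` is the `L`-caloric measure family for the cylinder `Ω × (t₀, ∞)`:
each `ω X` is a Borel probability measure on the parabolic boundary, and for every
bounded continuous `φ`, `X ↦ ∫ φ dω^X` is a (bounded) solution of `Lu = 0` in the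
cylinder extending continuously to `φ` at each point of the parabolic boundary. -/
def IsCaloricMeasureFrom {n : ℕ} (a : E n × ℝ → Fin n → Fin n → ℝ) (Ω : Set (E n))
    (t₀ : ℝ) (ω : E n × ℝ → Measure (E n × ℝ)) : Prop :=
  (∀ X ∈ CylFrom Ω t₀, IsProbabilityMeasure (ω X) ∧ ω X (pBFrom Ω t₀)ᶜ = 0) ∧
  ∀ φ : E n × ℝ → ℝ, Continuous φ → (∃ M, ∀ z, |φ z| ≤ M) →
    SolvesL a (fun X => ∫ z, φ z ∂ω X) (CylFrom Ω t₀) ∧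
    ∀ Z ∈ pBFrom Ω t₀, Tendsto (fun X => ∫ z, φ z ∂ω X)
      (nhdsWithin Z (CylFrom Ω t₀)) (nhds (φ Z))

/-- `ω` is the `L`-caloric measure family for `Q = Ω × (0, ∞)`. -/
def IsCaloricMeasure {n : ℕ} (a : E n × ℝ → Fin n → Fin n → ℝ) (Ω : Set (E n))
    (ω : E n × ℝ → Measure (E n × ℝ)) : Prop :=
  IsCaloricMeasureFrom a Ω 0 ω

/-- `Ω` is a Lipschitz domain with constants `m, r₀ > 0`: it is a nonempty open
connected set and near each boundary point, in a suitable orthonormal coordinate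
system centered at that point, it coincides with the region above the graph of a
function with `‖∇φ‖_{L^∞} ≤ m` (equivalently, `m`-Lipschitz). -/
def IsLipschitzDomain {n : ℕ} (hn : 0 < n) (Ω : Set (E n)) (m r₀ : ℝ) : Prop :=
  IsOpen Ω ∧ Ω.Nonempty ∧ IsConnected Ω ∧ 0 < m ∧ 0 < r₀ ∧
  ∀ y ∈ frontier Ω, ∃ (T : E n ≃ₗᵢ[ℝ] E n) (φ : E (n - 1) → ℝ),
    LipschitzWith m.toNNReal φ ∧
    ∀ x : E n, x ∈ Ω ∩ ball y r₀ ↔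
      ‖x - y‖ < r₀ ∧
        φ ((EuclideanSpace.equiv (Fin (n - 1)) ℝ).symm
            (fun i => T (x - y) (Fin.castLE (Nat.sub_le n 1) i))) <
          T (x - y) ⟨n - 1, Nat.sub_lt hn Nat.one_pos⟩

/-- The set `Ω^δ = {x ∈ Ω : dist(x, ∂Ω) > δ}`. -/
def innerSet {n : ℕ} (Ω : Set (E n)) (δ : ℝ) : Set (E n) :=
  {x ∈ Ω | δ < infDist x (frontier Ω)}

/-- The corkscrew property (2.3) with constant `μ`. -/
def Corkscrew {n : ℕ} (Ω : Set (E n)) (r₀ μ : ℝ) : Prop :=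
  ∀ y ∈ frontier Ω, ∀ r : ℝ, 0 < r → r < r₀ →
    (∃ y₁ : E n, ball y₁ (2 * μ * r) ⊆ ball y r ∩ Ω) ∧
    (∃ y₂ : E n, ball y₂ (2 * μ * r) ⊆ ball y r \ Ω)

namespace VDWS
variable {n : ℕ}



lemma euclid_sum_single (ξ : E n) : ∑ i, ξ i • EuclideanSpace.single i (1:ℝ) = ξ := by
  simpa [EuclideanSpace.basisFun_apply, EuclideanSpace.basisFun_repr] using
    (EuclideanSpace.basisFun (Fin n) ℝ).sum_repr ξ

lemma clm_eq_sum (L : E n →L[ℝ] ℝ) (ζ : E n) :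
    L ζ = ∑ j, ζ j * L (EuclideanSpace.single j (1:ℝ)) := by
  conv_lhs => rw [← euclid_sum_single ζ]
  rw [map_sum]
  simp [smul_eq_mul]

lemma bilin_eq_sum (B : E n →L[ℝ] E n →L[ℝ] ℝ) (ξ ζ : E n) :
    B ξ ζ = ∑ i, ∑ j, ξ i * ζ j *
      B (EuclideanSpace.single i (1:ℝ)) (EuclideanSpace.single j (1:ℝ)) := by
  have h1 : B ξ ζ = ∑ i, ξ i * (B (EuclideanSpace.single i (1:ℝ)) ζ) := by
    simpa [ContinuousLinearMap.flip_apply] using clm_eq_sum (B.flip ζ) ξ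
  rw [h1]
  refine Finset.sum_congr rfl fun i _ => ?_
  rw [clm_eq_sum (B (EuclideanSpace.single i 1)) ζ, Finset.mul_sum]
  exact Finset.sum_congr rfl fun j _ => by ring

lemma line_hasDerivAt {f : E n → ℝ} {x ξ : E n} {s : ℝ} (hf : DifferentiableAt ℝ f (x + s • ξ)) :
    HasDerivAt (fun t : ℝ => f (x + t • ξ)) (fderiv ℝ f (x + s • ξ) ξ) s := by
  have hc : HasDerivAt (fun t : ℝ => x + t • ξ) ξ s := by
    simpa using ((hasDerivAt_id s).smul_const ξ).const_add x
  exact hf.hasFDerivAt.comp_hasDerivAt s hc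

lemma fderiv_fderiv_apply {f : E n → ℝ} {x : E n} (hf : ContDiffAt ℝ 2 f x) (v w : E n) :
    fderiv ℝ (fun z => fderiv ℝ f z w) x v = fderiv ℝ (fderiv ℝ f) x v w := by
  have h1 : ContDiffAt ℝ 1 (fderiv ℝ f) x := hf.fderiv_right (m := 1) (by norm_num)
  have h2 : DifferentiableAt ℝ (fderiv ℝ f) x := h1.differentiableAt one_ne_zero
  rw [fderiv_clm_apply h2 (differentiableAt_const w)]
  simp

lemma deriv_nonpos_endpoint {h : ℝ → ℝ} {t₀ T : ℝ} (hd : DifferentiableAt ℝ h t₀)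
    (h0 : 0 < t₀) (h1 : t₀ ≤ T) (hmin : ∀ t ∈ Icc (0:ℝ) T, h t₀ ≤ h t) : deriv h t₀ ≤ 0 := by
  have hslope := hasDerivAt_iff_tendsto_slope.mp hd.hasDerivAt
  have h2 : Tendsto (slope h t₀) (nhdsWithin t₀ (Iio t₀)) (nhds (deriv h t₀)) :=
    hslope.mono_left (nhdsWithin_mono _ (fun z hz => ne_of_lt hz))
  refine le_of_tendsto h2 ?_
  have h3 : Ioo (0:ℝ) t₀ ∈ nhdsWithin t₀ (Iio t₀) := by
    rw [mem_nhdsWithin]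
    exact ⟨Ioi 0, isOpen_Ioi, h0, by intro z hz; exact ⟨hz.1, hz.2⟩⟩
  filter_upwards [h3] with t ht
  rw [slope_def_field]
  apply div_nonpos_of_nonneg_of_nonpos
  · have := hmin t ⟨le_of_lt ht.1, le_trans (le_of_lt ht.2) h1⟩
    linarith
  · linarith [ht.2]

lemma contraction_nonneg {N : ℕ} (A H : Fin N → Fin N → ℝ)
    (hA : ∀ ξ : Fin N → ℝ, 0 ≤ ∑ i, ∑ j, A i j * ξ i * ξ j)
    (hsym : ∀ i j, H i j = H j i)
    (hq : ∀ ξ : Fin N → ℝ, 0 ≤ ∑ i, ∑ j, ξ i * ξ j * H i j) :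
    0 ≤ ∑ i, ∑ j, A i j * H i j := by
  have hps : (Matrix.of H).PosSemidef := by
    apply Matrix.PosSemidef.of_dotProduct_mulVec_nonneg
    · ext i j
      simp [Matrix.conjTranspose_apply, hsym i j]
    · intro ξ
      have := hq ξ
      simp only [dotProduct, Matrix.mulVec, Matrix.of_apply, star_trivial]
      calc (0:ℝ) ≤ ∑ i, ∑ j, ξ i * ξ j * H i j := this
        _ = ∑ i, ξ i * ∑ j, H i j * ξ j := by
            refine Finset.sum_congr rfl fun i _ => ?_
            rw [Finset.mul_sum]
            exact Finset.sum_congr rfl fun j _ => by ring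
  obtain ⟨B, hB⟩ : ∃ B : Matrix (Fin N) (Fin N) ℝ, Matrix.of H = B.conjTranspose * B := by
    open scoped MatrixOrder in
    exact ⟨CFC.sqrt (Matrix.of H), by
      rw [← Matrix.star_eq_conjTranspose, (IsSelfAdjoint.of_nonneg (CFC.sqrt_nonneg _)).star_eq,
        CFC.sqrt_mul_sqrt_self _ hps.nonneg]⟩
  have hH : ∀ i j, H i j = ∑ k, B k i * B k j := by
    intro i j
    have h0 : (Matrix.of H) i j = (B.conjTranspose * B) i j := by rw [hB]
    simpa [Matrix.mul_apply, Matrix.conjTranspose_apply] using h0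
  have : ∑ i, ∑ j, A i j * H i j = ∑ k, ∑ i, ∑ j, A i j * B k i * B k j := by
    calc ∑ i, ∑ j, A i j * H i j
        = ∑ i, ∑ j, ∑ k, A i j * (B k i * B k j) := by
          simp_rw [hH, Finset.mul_sum]
      _ = ∑ i, ∑ k, ∑ j, A i j * (B k i * B k j) :=
          Finset.sum_congr rfl fun i _ => Finset.sum_comm
      _ = ∑ k, ∑ i, ∑ j, A i j * (B k i * B k j) := Finset.sum_comm
      _ = ∑ k, ∑ i, ∑ j, A i j * B k i * B k j := by
          refine Finset.sum_congr rfl fun k _ => Finset.sum_congr rfl fun i _ =>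
            Finset.sum_congr rfl fun j _ => by ring
  rw [this]
  exact Finset.sum_nonneg fun k _ => hA (fun i => B k i)

lemma second_deriv_nonneg_at_localmin {f : E n → ℝ} {x : E n} (hf : ContDiffAt ℝ 2 f x) (ξ : E n)
    (hmin : IsLocalMin (fun s : ℝ => f (x + s • ξ)) 0) :
    0 ≤ fderiv ℝ (fderiv ℝ f) x ξ ξ := by
  by_contra hneg
  push_neg at hneg
  -- a neighborhood where f is C²
  obtain ⟨U, hU, hfU⟩ := hf.contDiffOn le_rfl (by simp)
  obtain ⟨V, hVU, hVopen, hxV⟩ := _root_.mem_nhds_iff.mp hU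
  have hdiffV : ∀ z ∈ V, DifferentiableAt ℝ f z := fun z hz =>
    (((hfU.mono hVU).differentiableOn (by norm_num)).differentiableAt (hVopen.mem_nhds hz))
  -- the line through x
  have hcont : Continuous (fun s : ℝ => x + s • ξ) := by continuity
  have hT : IsOpen ((fun s : ℝ => x + s • ξ) ⁻¹' V) := hVopen.preimage hcont
  have hT0 : (0:ℝ) ∈ (fun s : ℝ => x + s • ξ) ⁻¹' V := by simpa using hxV
  obtain ⟨δ₀, hδ₀, hball⟩ := Metric.isOpen_iff.mp hT 0 hT0
  -- p s = directional derivative along the line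
  set p : ℝ → ℝ := fun s => fderiv ℝ f (x + s • ξ) ξ with hpdef
  set g : ℝ → ℝ := fun s => f (x + s • ξ) with hgdef
  have hgs : ∀ s : ℝ, s ∈ ball (0:ℝ) δ₀ → HasDerivAt g (p s) s := by
    intro s hs
    exact line_hasDerivAt (hdiffV _ (hball hs))
  have hp0 : p 0 = 0 := by
    have h1 : HasDerivAt g (p 0) 0 := hgs 0 (mem_ball_self hδ₀)
    rw [← h1.deriv]
    exact hmin.deriv_eq_zero
  -- p has derivative β < 0 at 0
  have h1 : ContDiffAt ℝ 1 (fderiv ℝ f) x := hf.fderiv_right (m := 1) (by norm_num)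
  have hP : DifferentiableAt ℝ (fun z => fderiv ℝ f z ξ) x :=
    (h1.differentiableAt one_ne_zero).clm_apply (differentiableAt_const ξ)
  have hpd : HasDerivAt p (fderiv ℝ (fderiv ℝ f) x ξ ξ) 0 := by
    have h2 : HasDerivAt (fun s : ℝ => fderiv ℝ f (x + s • ξ) ξ)
        (fderiv ℝ (fun z => fderiv ℝ f z ξ) (x + (0:ℝ) • ξ) ξ) 0 :=
      line_hasDerivAt (f := fun z => fderiv ℝ f z ξ) (by simpa using hP)
    have h3 : fderiv ℝ (fun z => fderiv ℝ f z ξ) (x + (0:ℝ) • ξ) ξ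
        = fderiv ℝ (fderiv ℝ f) x ξ ξ := by
      rw [show x + (0:ℝ) • ξ = x by simp]
      exact fderiv_fderiv_apply hf ξ ξ
    rw [h3] at h2
    exact h2
  -- hence p is negative just to the right of 0
  have hslope := hasDerivAt_iff_tendsto_slope.mp hpd
  have hev : ∀ᶠ s in nhdsWithin (0:ℝ) (Ioi 0), p s < 0 := by
    have h4 : Tendsto (slope p 0) (nhdsWithin 0 (Ioi 0)) (nhds (fderiv ℝ (fderiv ℝ f) x ξ ξ)) :=
      hslope.mono_left (nhdsWithin_mono _ (fun z hz => ne_of_gt hz))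
    have h5 : ∀ᶠ s in nhdsWithin (0:ℝ) (Ioi 0), slope p 0 s < 0 :=
      h4.eventually (gt_mem_nhds hneg)
    have h6 : ∀ᶠ s in nhdsWithin (0:ℝ) (Ioi 0), s ∈ Ioi (0:ℝ) := eventually_mem_nhdsWithin
    filter_upwards [h5, h6] with s hs1 hs2
    rw [slope_def_field, hp0] at hs1
    have : p s / s < 0 := by simpa using hs1
    rcases div_neg_iff.mp this with ⟨h7, h8⟩ | ⟨h7, h8⟩
    · linarith [mem_Ioi.mp hs2]
    · exact h7
  obtain ⟨δ₁, hδ₁mem, hδ₁⟩ := mem_nhdsGT_iff_exists_Ioo_subset.mp hev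
  -- local min gives a radius
  obtain ⟨δ₂, hδ₂, hminball⟩ := Metric.eventually_nhds_iff.mp hmin
  set δ : ℝ := min (δ₀/2) (min (min δ₁ 1 / 2) (δ₂/2)) with hδdef
  have hδpos : 0 < δ := by
    have : (0:ℝ) < min δ₁ 1 := lt_min (mem_Ioi.mp hδ₁mem) one_pos
    positivity
  have hδlt₀ : δ < δ₀ := lt_of_le_of_lt (min_le_left _ _) (by linarith)
  have hδlt₁ : δ < δ₁ := by
    have h7 : δ ≤ min δ₁ 1 / 2 := le_trans (min_le_right _ _) (min_le_left _ _)
    have h8 : min δ₁ 1 ≤ δ₁ := min_le_left _ _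
    have : (0:ℝ) < min δ₁ 1 := lt_min (mem_Ioi.mp hδ₁mem) one_pos
    linarith
  have hδlt₂ : δ < δ₂ := by
    have h7 : δ ≤ δ₂/2 := le_trans (min_le_right _ _) (min_le_right _ _)
    linarith
  have hIccball : ∀ s ∈ Icc (0:ℝ) δ, s ∈ ball (0:ℝ) δ₀ := by
    intro s hs
    rw [mem_ball, Real.dist_eq, sub_zero, abs_of_nonneg hs.1]
    linarith [hs.2]
  have hcontg : ContinuousOn g (Icc 0 δ) := fun s hs =>
    ((hgs s (hIccball s hs)).continuousAt).continuousWithinAt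
  have hderivneg : ∀ s ∈ interior (Icc (0:ℝ) δ), deriv g s < 0 := by
    intro s hs
    rw [interior_Icc] at hs
    rw [(hgs s (hIccball s ⟨le_of_lt hs.1, le_of_lt hs.2⟩)).deriv]
    exact hδ₁ ⟨hs.1, lt_trans hs.2 hδlt₁⟩
  have hSA := strictAntiOn_of_deriv_neg (convex_Icc 0 δ) hcontg hderivneg
  have h9 : g δ < g 0 := hSA (left_mem_Icc.mpr (le_of_lt hδpos)) (right_mem_Icc.mpr (le_of_lt hδpos)) hδpos
  have h10 : g 0 ≤ g δ := by
    have := hminball (y := δ) (by rw [Real.dist_eq, sub_zero, abs_of_nonneg (le_of_lt hδpos)]; linarith)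
    simpa [hgdef] using this
  linarith


def Sf (y : E n) (x : E n) : ℝ := ∑ i, (x i - y i)^2
def gradS (y x : E n) : E n →L[ℝ] ℝ :=
  ∑ i, (2*(x i - y i)) • (EuclideanSpace.proj i : E n →L[ℝ] ℝ)
def Pf (y : E n) (m : ℝ) (x : E n) : ℝ := 1 - m * Sf y x
def Vb (y : E n) (m lam : ℝ) (q : ℕ) (X : E n × ℝ) : ℝ :=
  Real.exp (-lam * X.2) * (Pf y m X.1)^q
lemma hasFDerivAt_coord (i : Fin n) (x : E n) :
    HasFDerivAt (fun x : E n => x i) (EuclideanSpace.proj i : E n →L[ℝ] ℝ) x :=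
  (EuclideanSpace.proj i : E n →L[ℝ] ℝ).hasFDerivAt
lemma hasFDerivAt_Sf (y x : E n) : HasFDerivAt (Sf y) (gradS y x) x := by
  apply HasFDerivAt.fun_sum
  intro i _
  have h1 : HasFDerivAt (fun x : E n => x i - y i) (EuclideanSpace.proj i : E n →L[ℝ] ℝ) x :=
    (hasFDerivAt_coord i x).sub_const (y i)
  have h2 := (hasDerivAt_pow 2 (x i - y i)).comp_hasFDerivAt x h1
  exact h2.congr_fderiv (by congr 1; norm_num)
lemma gradS_apply (y x : E n) (j : Fin n) :
    gradS y x (EuclideanSpace.single j (1:ℝ)) = 2*(x j - y j) := by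
  simp only [gradS, ContinuousLinearMap.sum_apply, ContinuousLinearMap.smul_apply]
  have h1 : ∀ i : Fin n, (EuclideanSpace.proj i : E n →L[ℝ] ℝ) (EuclideanSpace.single j (1:ℝ))
      = if i = j then (1:ℝ) else 0 := by
    intro i
    have : (EuclideanSpace.proj i : E n →L[ℝ] ℝ) (EuclideanSpace.single j (1:ℝ))
        = (EuclideanSpace.single j (1:ℝ)) i := rfl
    rw [this, EuclideanSpace.single_apply]
  simp only [h1, smul_eq_mul, mul_ite, mul_one, mul_zero]
  simp [Finset.sum_ite_eq']
lemma hasFDerivAt_Pf (y : E n) (m : ℝ) (x : E n) :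
    HasFDerivAt (Pf y m) ((-m) • gradS y x) x := by
  have h1 := ((hasFDerivAt_Sf y x).const_mul m).const_sub 1
  exact h1.congr_fderiv (neg_smul m _).symm
lemma hasFDerivAt_pow_Pf (y : E n) (m : ℝ) (q : ℕ) (x : E n) :
    HasFDerivAt (fun x => (Pf y m x)^q)
      ((((q:ℝ) * (Pf y m x)^(q-1)) * (-m)) • gradS y x) x := by
  have h2 := (hasDerivAt_pow q (Pf y m x)).comp_hasFDerivAt x (hasFDerivAt_Pf y m x)
  exact h2.congr_fderiv (smul_smul _ _ _)
lemma contDiff_Sf (y : E n) : ContDiff ℝ (⊤ : ℕ∞) (Sf y) := by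
  apply ContDiff.sum
  intro i _
  exact ((EuclideanSpace.proj i : E n →L[ℝ] ℝ).contDiff.sub contDiff_const).pow 2
lemma contDiff_Pf_pow (y : E n) (m : ℝ) (q : ℕ) : ContDiff ℝ (⊤ : ℕ∞) (fun x => (Pf y m x)^q) :=
  ((contDiff_const.sub (contDiff_const.mul (contDiff_Sf y)))).pow q
lemma fderiv_Vb_slice (y : E n) (m lam : ℝ) (q : ℕ) (t : ℝ) (x : E n) (j : Fin n) :
    fderiv ℝ (fun x' => Vb y m lam q (x', t)) x (EuclideanSpace.single j (1:ℝ))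
      = Real.exp (-lam*t) * (((q:ℝ) * (Pf y m x)^(q-1) * (-m)) * (2*(x j - y j))) := by
  have h1 : HasFDerivAt (fun x' => Vb y m lam q (x', t))
      (Real.exp (-lam*t) • ((((q:ℝ) * (Pf y m x)^(q-1)) * (-m)) • gradS y x)) x := by
    exact (hasFDerivAt_pow_Pf y m q x).const_mul (Real.exp (-lam*t))
  rw [h1.fderiv]
  simp [gradS_apply, mul_assoc]

-- NEW PART
lemma contDiffAt_Vb_slice (y : E n) (m lam : ℝ) (q : ℕ) (t : ℝ) (x : E n) :
    ContDiffAt ℝ 2 (fun x' => Vb y m lam q (x', t)) x := by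
  have : ContDiff ℝ (⊤ : ℕ∞) (fun x' : E n => Vb y m lam q (x', t)) := by
    simpa [Vb] using contDiff_const.mul (contDiff_Pf_pow y m q)
  exact (this.contDiffAt).of_le (WithTop.coe_le_coe.mpr le_top)

lemma continuous_Vb (y : E n) (m lam : ℝ) (q : ℕ) : Continuous (Vb y m lam q) := by
  apply Continuous.mul
  · exact Real.continuous_exp.comp (continuous_const.mul continuous_snd)
  · exact ((contDiff_Pf_pow y m q).continuous).comp continuous_fst

lemma hasDerivAt_Vb_time (y : E n) (m lam : ℝ) (q : ℕ) (x : E n) (t : ℝ) :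
    HasDerivAt (fun t' => Vb y m lam q (x, t'))
      (-lam * Real.exp (-lam*t) * (Pf y m x)^q) t := by
  have h1 : HasDerivAt (fun t' : ℝ => Real.exp (-lam * t')) (Real.exp (-lam * t) * (-lam)) t := by
    simpa using ((hasDerivAt_id t).const_mul (-lam)).exp
  have h2 := h1.mul_const ((Pf y m x)^q)
  simpa [Vb, mul_comm, mul_assoc, mul_left_comm] using h2

lemma Dt_Vb (y : E n) (m lam : ℝ) (q : ℕ) (X : E n × ℝ) :
    Dt (Vb y m lam q) X = -lam * Real.exp (-lam*X.2) * (Pf y m X.1)^q :=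
  (hasDerivAt_Vb_time y m lam q X.1 X.2).deriv

lemma D2_Vb (y : E n) (m lam : ℝ) (q : ℕ) (hq : 2 ≤ q) (X : E n × ℝ) (i j : Fin n) :
    D2 (Vb y m lam q) X i j =
      Real.exp (-lam * X.2) *
        (4*m^2*(q:ℝ)*((q:ℝ)-1)*(Pf y m X.1)^(q-2)*(X.1 i - y i)*(X.1 j - y j)
          - 2*m*(q:ℝ)*(Pf y m X.1)^(q-1)*(if i = j then 1 else 0)) := by
  obtain ⟨x, t⟩ := X
  have hfe : (fun x => fderiv ℝ (fun x' => Vb y m lam q (x', t)) x (EuclideanSpace.single j (1:ℝ)))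
      = fun x => (Real.exp (-lam*t) * (q:ℝ) * (-m) * 2) * ((Pf y m x)^(q-1) * (x j - y j)) := by
    funext x'
    rw [fderiv_Vb_slice]
    ring
  unfold D2
  rw [hfe]
  have hmul : HasFDerivAt (fun x' => (Pf y m x')^(q-1) * (x' j - y j))
      (((Pf y m x)^(q-1)) • (EuclideanSpace.proj j : E n →L[ℝ] ℝ)
        + (x j - y j) • (((((q-1:ℕ):ℝ) * (Pf y m x)^(q-1-1)) * (-m)) • gradS y x)) x :=
    (hasFDerivAt_pow_Pf y m (q-1) x).mul ((hasFDerivAt_coord j x).sub_const (y j))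
  have h3 := (hmul.const_mul (Real.exp (-lam*t) * (q:ℝ) * (-m) * 2)).fderiv
  rw [h3]
  have hq1 : ((q-1:ℕ):ℝ) = (q:ℝ) - 1 := by
    have : (1:ℕ) ≤ q := le_trans (by norm_num) hq
    push_cast [Nat.cast_sub this]
    ring
  have hq2 : q - 1 - 1 = q - 2 := by omega
  have hproj : (EuclideanSpace.proj j : E n →L[ℝ] ℝ) (EuclideanSpace.single i (1:ℝ))
      = if i = j then (1:ℝ) else 0 := by
    have : (EuclideanSpace.proj j : E n →L[ℝ] ℝ) (EuclideanSpace.single i (1:ℝ))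
        = (EuclideanSpace.single i (1:ℝ)) j := rfl
    rw [this, EuclideanSpace.single_apply]
    simp [eq_comm]
  simp only [ContinuousLinearMap.smul_apply, ContinuousLinearMap.add_apply,
    ContinuousLinearMap.coe_smul', Pi.smul_apply, smul_eq_mul, hproj, gradS_apply, hq1, hq2]
  ring

lemma Sf_nonneg (y x : E n) : 0 ≤ Sf y x :=
  Finset.sum_nonneg fun i _ => sq_nonneg _

lemma Sf_eq_dist (y x : E n) : Sf y x = dist x y ^ 2 := by
  rw [dist_eq_norm, EuclideanSpace.norm_eq]
  rw [Real.sq_sqrt (Finset.sum_nonneg fun i _ => sq_nonneg _)]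
  refine Finset.sum_congr rfl fun i _ => ?_
  have h : (x - y) i = x i - y i := rfl
  rw [h, Real.norm_eq_abs, sq_abs]

lemma barrier_num (ν nr s : ℝ) (k : ℕ) (hν : 0 < ν) (hs1 : s ≤ 1)
    (hnr : 0 ≤ nr) (hk : nr/(2*ν^2) ≤ (k:ℝ)+1) :
    0 ≤ 2*((k:ℝ)+1)*ν*(1-s) - (nr/ν)*s + (nr/ν)*s^2 := by
  have h2 : nr/ν ≤ 2*((k:ℝ)+1)*ν := by
    rw [div_le_iff₀ hν]
    have h3 := (div_le_iff₀ (by positivity : (0:ℝ) < 2*ν^2)).mp hk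
    nlinarith
  have h4 : (0:ℝ) ≤ nr/ν := by positivity
  nlinarith [sq_nonneg (1-s)]

lemma barrier_ineq_core (ν m nr e s Qa tr : ℝ) (k : ℕ)
    (hν : 0 < ν) (hm : 0 < m) (hnr : 0 ≤ nr) (hk : nr/(2*ν^2) ≤ (k:ℝ)+1)
    (he : 0 < e) (hs0 : 0 < s) (hs1 : s ≤ 1)
    (hQ : ν * ((1-s)/m) ≤ Qa) (htr : tr ≤ nr * ν⁻¹) :
    -(2*nr*((k:ℝ)+2)*m/ν) * e * s^(k+2) ≤
      e*(4*m^2*((k:ℝ)+2)*(((k:ℝ)+2)-1)*s^k)*Qa - e*(2*m*((k:ℝ)+2)*s^(k+1))*tr := by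
  have hA0 : (0:ℝ) ≤ 4*m^2*((k:ℝ)+2)*(((k:ℝ)+2)-1)*s^k := by
    have h : ((k:ℝ)+2)-1 = (k:ℝ)+1 := by ring
    rw [h]; positivity
  have hB0 : (0:ℝ) ≤ 2*m*((k:ℝ)+2)*s^(k+1) := by positivity
  have h1 := mul_le_mul_of_nonneg_left hQ (mul_nonneg he.le hA0)
  have h2 := mul_le_mul_of_nonneg_left htr (mul_nonneg he.le hB0)
  have hkey2 := barrier_num ν nr s k hν hs1 hnr hk
  have hfac : e*(4*m^2*((k:ℝ)+2)*(((k:ℝ)+2)-1)*s^k)*(ν*((1-s)/m))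
        - e*(2*m*((k:ℝ)+2)*s^(k+1))*(nr*ν⁻¹)
        + (2*nr*((k:ℝ)+2)*m/ν) * e * s^(k+2)
      = (e * (2*m*((k:ℝ)+2)*s^k)) * (2*((k:ℝ)+1)*ν*(1-s) - (nr/ν)*s + (nr/ν)*s^2) := by
    field_simp
    ring
  have hprod : (0:ℝ) ≤ (e * (2*m*((k:ℝ)+2)*s^k)) *
      (2*((k:ℝ)+1)*ν*(1-s) - (nr/ν)*s + (nr/ν)*s^2) :=
    mul_nonneg (by positivity) hkey2
  have key : -(2*nr*((k:ℝ)+2)*m/ν) * e * s^(k+2) ≤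
      e*(4*m^2*((k:ℝ)+2)*(((k:ℝ)+2)-1)*s^k)*(ν*((1-s)/m))
        - e*(2*m*((k:ℝ)+2)*s^(k+1))*(nr*ν⁻¹) := by linarith [hfac, hprod]
  calc -(2*nr*((k:ℝ)+2)*m/ν) * e * s^(k+2)
      ≤ e*(4*m^2*((k:ℝ)+2)*(((k:ℝ)+2)-1)*s^k)*(ν*((1-s)/m))
        - e*(2*m*((k:ℝ)+2)*s^(k+1))*(nr*ν⁻¹) := key
    _ ≤ _ := by
        have ha' : e*(2*m*((k:ℝ)+2)*s^(k+1))*tr ≤ e*(2*m*((k:ℝ)+2)*s^(k+1))*(nr*ν⁻¹) := h2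
        linarith [h1]

lemma barrier_subsolution (ν : ℝ) (hν : 0 < ν) (m : ℝ) (hm : 0 < m) (k : ℕ) (lam : ℝ)
    (hlam : lam = 2*(n:ℝ)*((k:ℝ)+2)*m/ν)
    (hk : (n:ℝ)/(2*ν^2) ≤ (k:ℝ)+1) (y : E n) (X : E n × ℝ)
    (a : E n × ℝ → Fin n → Fin n → ℝ)
    (hell : ∀ ξ : Fin n → ℝ, ν * ∑ i, ξ i ^ 2 ≤ ∑ i, ∑ j, a X i j * ξ i * ξ j)
    (hbd : ∀ i j, |a X i j| ≤ ν⁻¹)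
    (hs0 : 0 < Pf y m X.1) (hs1 : Pf y m X.1 ≤ 1) :
    Dt (Vb y m lam (k+2)) X ≤ ∑ i, ∑ j, a X i j * D2 (Vb y m lam (k+2)) X i j := by
  have hqcast : ((k+2:ℕ):ℝ) = (k:ℝ)+2 := by push_cast; ring
  have hexp2 : (k+2) - 2 = k := by omega
  have hexp1 : (k+2) - 1 = k+1 := by omega
  have hterm : ∀ i j, a X i j * D2 (Vb y m lam (k+2)) X i j
      = Real.exp (-lam * X.2)*(4*m^2*((k:ℝ)+2)*(((k:ℝ)+2)-1)*(Pf y m X.1)^k)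
          *(a X i j * (X.1 i - y i) * (X.1 j - y j))
        - (if j = i then Real.exp (-lam * X.2)*(2*m*((k:ℝ)+2)*(Pf y m X.1)^(k+1))*(a X i j) else 0) := by
    intro i j
    rw [D2_Vb y m lam (k+2) (by omega) X i j, hexp2, hexp1, hqcast]
    by_cases h : i = j
    · subst h
      rw [if_pos rfl, if_pos rfl]
      ring
    · rw [if_neg h, if_neg (fun hji => h hji.symm)]
      ring
  have hsum : ∑ i, ∑ j, a X i j * D2 (Vb y m lam (k+2)) X i j
      = Real.exp (-lam * X.2)*(4*m^2*((k:ℝ)+2)*(((k:ℝ)+2)-1)*(Pf y m X.1)^k)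
          *(∑ i, ∑ j, a X i j * (X.1 i - y i) * (X.1 j - y j))
        - Real.exp (-lam * X.2)*(2*m*((k:ℝ)+2)*(Pf y m X.1)^(k+1))*(∑ i, a X i i) := by
    calc ∑ i, ∑ j, a X i j * D2 (Vb y m lam (k+2)) X i j
        = ∑ i, ((∑ j, Real.exp (-lam * X.2)*(4*m^2*((k:ℝ)+2)*(((k:ℝ)+2)-1)*(Pf y m X.1)^k)
            *(a X i j * (X.1 i - y i) * (X.1 j - y j)))
          - Real.exp (-lam * X.2)*(2*m*((k:ℝ)+2)*(Pf y m X.1)^(k+1))*(a X i i)) := by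
          refine Finset.sum_congr rfl fun i _ => ?_
          rw [Finset.sum_congr rfl fun j _ => hterm i j, Finset.sum_sub_distrib]
          congr 1
          rw [Finset.sum_ite_eq' Finset.univ i
            (fun j => Real.exp (-lam * X.2)*(2*m*((k:ℝ)+2)*(Pf y m X.1)^(k+1))*(a X i j))]
          simp
      _ = _ := by
          rw [Finset.sum_sub_distrib]
          congr 1
          · rw [Finset.mul_sum]
            refine Finset.sum_congr rfl fun i _ => ?_
            rw [Finset.mul_sum]
          · rw [Finset.mul_sum]
  rw [hsum, Dt_Vb]
  have hQ : ν * ((1 - Pf y m X.1)/m) ≤ ∑ i, ∑ j, a X i j * (X.1 i - y i) * (X.1 j - y j) := by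
    have hSf : Sf y X.1 = (1 - Pf y m X.1)/m := by
      simp only [Pf]
      field_simp
      ring
    rw [← hSf]
    exact hell (fun i => X.1 i - y i)
  have htr : ∑ i, a X i i ≤ (n:ℝ) * ν⁻¹ := by
    calc ∑ i, a X i i ≤ ∑ _i : Fin n, ν⁻¹ :=
          Finset.sum_le_sum fun i _ => le_of_abs_le (hbd i i)
      _ = (n:ℝ) * ν⁻¹ := by simp [mul_comm]
  have hcore := barrier_ineq_core ν m (n:ℝ) (Real.exp (-lam * X.2)) (Pf y m X.1)
    (∑ i, ∑ j, a X i j * (X.1 i - y i) * (X.1 j - y j)) (∑ i, a X i i) k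
    hν hm (Nat.cast_nonneg n) hk (Real.exp_pos _) hs0 hs1 hQ htr
  calc -lam * Real.exp (-lam * X.2) * (Pf y m X.1)^(k+2)
      = -(2*(n:ℝ)*((k:ℝ)+2)*m/ν) * Real.exp (-lam * X.2) * (Pf y m X.1)^(k+2) := by rw [hlam]
    _ ≤ _ := hcore

lemma le_on_closure {α : Type*} [TopologicalSpace α] {f : α → ℝ} {s : Set α} {c : ℝ}
    (hf : ContinuousOn f (closure s)) (h : ∀ x ∈ s, f x ≤ c) :
    ∀ x ∈ closure s, f x ≤ c := by
  intro x hx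
  have hne : (nhdsWithin x s).NeBot := mem_closure_iff_nhdsWithin_neBot.mp hx
  have h2 : Filter.Tendsto f (nhdsWithin x s) (nhds (f x)) :=
    ((hf x hx).mono subset_closure).tendsto
  exact le_of_tendsto h2 (eventually_nhdsWithin_of_forall h)

lemma eq_zero_on_closure {α : Type*} [TopologicalSpace α] {f : α → ℝ} {s : Set α}
    (hf : ContinuousOn f (closure s)) (h : ∀ x ∈ s, f x = 0) :
    ∀ x ∈ closure s, f x = 0 := by
  intro x hx
  have hne : (nhdsWithin x s).NeBot := mem_closure_iff_nhdsWithin_neBot.mp hx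
  have h2 : Filter.Tendsto f (nhdsWithin x s) (nhds (f x)) :=
    ((hf x hx).mono subset_closure).tendsto
  have h3 : Filter.Tendsto f (nhdsWithin x s) (nhds 0) := by
    refine Filter.Tendsto.congr' ?_ tendsto_const_nhds
    filter_upwards [eventually_mem_nhdsWithin] with z hz
    exact (h z hz).symm
  exact tendsto_nhds_unique h2 h3

lemma snd_fderiv_comb {f g : E n → ℝ} {x₀ : E n} (c C : ℝ)
    (hf : ContDiffAt ℝ 2 f x₀) (hg : ContDiffAt ℝ 2 g x₀) (v w : E n) :
    fderiv ℝ (fderiv ℝ (fun x => (c * f x + C) - g x)) x₀ v w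
      = c * fderiv ℝ (fderiv ℝ f) x₀ v w - fderiv ℝ (fderiv ℝ g) x₀ v w := by
  obtain ⟨U1, hU1, hfU1⟩ := hf.contDiffOn le_rfl (by simp)
  obtain ⟨U2, hU2, hgU2⟩ := hg.contDiffOn le_rfl (by simp)
  obtain ⟨V1, hV1U, hV1o, hxV1⟩ := _root_.mem_nhds_iff.mp hU1
  obtain ⟨V2, hV2U, hV2o, hxV2⟩ := _root_.mem_nhds_iff.mp hU2
  have hdf : ∀ z ∈ V1, DifferentiableAt ℝ f z := fun z hz =>
    ((hfU1.mono hV1U).differentiableOn (by norm_num)).differentiableAt (hV1o.mem_nhds hz)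
  have hdg : ∀ z ∈ V2, DifferentiableAt ℝ g z := fun z hz =>
    ((hgU2.mono hV2U).differentiableOn (by norm_num)).differentiableAt (hV2o.mem_nhds hz)
  have hEq : (fderiv ℝ (fun x => (c * f x + C) - g x))
      =ᶠ[nhds x₀] (fun z => c • fderiv ℝ f z - fderiv ℝ g z) := by
    filter_upwards [(hV1o.inter hV2o).mem_nhds ⟨hxV1, hxV2⟩] with z hz
    exact ((((hdf z hz.1).hasFDerivAt.const_mul c).add_const C).sub
      (hdg z hz.2).hasFDerivAt).fderiv
  rw [Filter.EventuallyEq.fderiv_eq hEq]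
  have hDf : DifferentiableAt ℝ (fderiv ℝ f) x₀ :=
    (hf.fderiv_right (m := 1) (by norm_num)).differentiableAt one_ne_zero
  have hDg : DifferentiableAt ℝ (fderiv ℝ g) x₀ :=
    (hg.fderiv_right (m := 1) (by norm_num)).differentiableAt one_ne_zero
  rw [fderiv_fun_sub (f := fun z => c • fderiv ℝ f z) (hDf.const_smul c) hDg, fderiv_fun_const_smul hDf c]
  simp [smul_eq_mul]

lemma SolvesL_neg {a : E n × ℝ → Fin n → Fin n → ℝ} {u : E n × ℝ → ℝ} {V : Set (E n × ℝ)}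
    (h : SolvesL a u V) : SolvesL a (fun X => -u X) V := by
  constructor
  · intro X hX
    exact ⟨((h.1 X hX).1).neg, ((h.1 X hX).2).neg⟩
  · intro X hX
    have hD2 : ∀ i j, D2 (fun X => -u X) X i j = -(D2 u X i j) := by
      intro i j
      unfold D2
      have h1 : (fun x => fderiv ℝ (fun x' => -u (x', X.2)) x (EuclideanSpace.single j 1))
          = fun x => -(fderiv ℝ (fun x' => u (x', X.2)) x (EuclideanSpace.single j 1)) := by
        funext x
        rw [fderiv_fun_neg]
        simp
      rw [h1, fderiv_fun_neg]
      simp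
    have hDt : Dt (fun X => -u X) X = -(Dt u X) := by
      unfold Dt
      exact deriv.neg
    have h2 := h.2 X hX
    unfold LVal at h2 ⊢
    rw [hDt]
    have hsum : ∑ i, ∑ j, a X i j * D2 (fun X => -u X) X i j
        = -∑ i, ∑ j, a X i j * D2 u X i j := by
      simp [hD2, mul_neg, Finset.sum_neg_distrib]
    rw [hsum]
    linarith

set_option maxHeartbeats 2000000 in
lemma stepA {n : ℕ} {ν : ℝ} (hν : 0 < ν) {k : ℕ}
    (hk : (n:ℝ)/(2*ν^2) ≤ (k:ℝ)+1)
    (a : E n × ℝ → Fin n → Fin n → ℝ)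
    (hcoef : ∀ X : E n × ℝ, 0 < X.2 →
      (∀ ξ : Fin n → ℝ, ν * ∑ i, ξ i ^ 2 ≤ ∑ i, ∑ j, a X i j * ξ i * ξ j) ∧
      ∀ i j, |a X i j| ≤ ν⁻¹)
    (y : E n) (r : ℝ) (hr : 0 < r) (u : E n × ℝ → ℝ)
    (huc : ContinuousOn u (closedBall y (2*r) ×ˢ Icc 0 ((2*r)^2)))
    (hsol : SolvesL a u (ball y (2*r) ×ˢ Ioo 0 ((2*r)^2)))
    (hzero : ∀ x ∈ closedBall y (2*r), u (x, 0) = 0)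
    (M₂ : ℝ) (hM₂0 : 0 ≤ M₂)
    (hM₂ : ∀ X ∈ closedBall y (2*r) ×ˢ Icc 0 ((2*r)^2), u X ≤ M₂)
    (T' : ℝ) (hT0 : 0 < T') (hT1 : T' < (2*r)^2) (ε : ℝ) (hε : 0 < ε) :
    ∀ X ∈ closedBall y (2*r) ×ˢ Icc 0 T',
      u X ≤ M₂ * (1 - Vb y (1/(4*r^2)) (2*(n:ℝ)*((k:ℝ)+2)*(1/(4*r^2))/ν) (k+2) X)
        + ε*(1+X.2) := by
  intro Z hZ
  set m : ℝ := 1/(4*r^2) with hmdef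
  have hm : 0 < m := by positivity
  set lam : ℝ := 2*(n:ℝ)*((k:ℝ)+2)*m/ν with hlamdef
  have hlam0 : 0 ≤ lam := by
    rw [hlamdef]; positivity
  set W : E n × ℝ → ℝ := Vb y m lam (k+2) with hWdef
  set φ : E n × ℝ → ℝ := fun X => M₂ * (1 - W X) + ε*(1+X.2) - u X with hφdef
  suffices hφ0 : 0 ≤ φ Z by
    have h := hφ0
    simp only [hφdef] at h
    linarith
  set K : Set (E n × ℝ) := closedBall y (2*r) ×ˢ Icc 0 T' with hKdef
  have hKsub : K ⊆ closedBall y (2*r) ×ˢ Icc 0 ((2*r)^2) := by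
    rw [hKdef]
    exact prod_mono_right (Icc_subset_Icc_right (le_of_lt hT1))
  have hKc : IsCompact K := (isCompact_closedBall y (2*r)).prod isCompact_Icc
  have hKne : K.Nonempty := ⟨(y, 0), ⟨mem_closedBall_self (by positivity), le_rfl, le_of_lt hT0⟩⟩
  have hφcont : ContinuousOn φ K := by
    apply ContinuousOn.sub
    · apply ContinuousOn.add
      · exact continuousOn_const.mul
          (continuousOn_const.sub ((continuous_Vb y m lam (k+2)).continuousOn))
      · exact continuousOn_const.mul (continuousOn_const.add continuous_snd.continuousOn)
    · exact huc.mono hKsub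
  obtain ⟨X₀, hX₀K, hminOn⟩ := hKc.exists_isMinOn hKne hφcont
  have hmin : ∀ X ∈ K, φ X₀ ≤ φ X := fun X hX => hminOn hX
  suffices h0 : 0 ≤ φ X₀ from le_trans h0 (hmin Z hZ)
  by_contra hneg
  push_neg at hneg
  obtain ⟨x₀, t₀⟩ := X₀
  obtain ⟨hx₀, ht₀⟩ := hX₀K
  dsimp only at hx₀ ht₀
  -- basic bounds for the barrier on the closed ball
  have hPf01 : ∀ x ∈ closedBall y (2*r), 0 ≤ Pf y m x ∧ Pf y m x ≤ 1 := by
    intro x hx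
    have hSf : Sf y x = dist x y ^2 := Sf_eq_dist y x
    have hd : dist x y ≤ 2*r := mem_closedBall.mp hx
    have hd0 : 0 ≤ dist x y := dist_nonneg
    constructor
    · have h3 : dist x y ^2 ≤ 4*r^2 := by nlinarith
      have h5 : m * Sf y x ≤ m * (4*r^2) := by
        rw [hSf]
        exact mul_le_mul_of_nonneg_left h3 (le_of_lt hm)
      have h6 : m * (4*r^2) = 1 := by rw [hmdef]; field_simp
      simp only [Pf]
      linarith
    · simp only [Pf]
      nlinarith [mul_nonneg (le_of_lt hm) (Sf_nonneg y x)]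
  have hW01 : ∀ x ∈ closedBall y (2*r), ∀ t:ℝ, 0 ≤ t → 0 ≤ W (x,t) ∧ W (x,t) ≤ 1 := by
    intro x hx t ht
    obtain ⟨hp0, hp1⟩ := hPf01 x hx
    have hpow0 : 0 ≤ (Pf y m x)^(k+2) := pow_nonneg hp0 _
    have hpow1 : (Pf y m x)^(k+2) ≤ 1 := pow_le_one₀ hp0 hp1
    have hexp1 : Real.exp (-lam*t) ≤ 1 := by
      calc Real.exp (-lam*t) ≤ Real.exp 0 := Real.exp_le_exp.mpr (by nlinarith)
        _ = 1 := Real.exp_zero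
    have hexp0 : (0:ℝ) < Real.exp (-lam*t) := Real.exp_pos _
    constructor
    · exact mul_nonneg (le_of_lt hexp0) hpow0
    · calc Real.exp (-lam*t) * (Pf y m x)^(k+2) ≤ 1 * 1 := by
            apply mul_le_mul hexp1 hpow1 hpow0 zero_le_one
        _ = 1 := by ring
  rcases eq_or_lt_of_le ht₀.1 with h0eq | h0lt
  · -- bottom case
    have hu0 : u (x₀, t₀) = 0 := by rw [← h0eq]; exact hzero x₀ hx₀
    have hW1 := (hW01 x₀ hx₀ t₀ ht₀.1).2
    have hcontra : 0 ≤ φ (x₀,t₀) := by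
      simp only [hφdef]
      have h8 : 0 ≤ M₂ * (1 - W (x₀,t₀)) := mul_nonneg hM₂0 (by linarith)
      rw [hu0]
      have ht00 : (0:ℝ) ≤ t₀ := ht₀.1
      nlinarith
    exact absurd hcontra (not_le.mpr hneg)
  rcases eq_or_lt_of_le (mem_closedBall.mp hx₀) with hbeq | hblt
  · -- lateral case
    have hSf : Sf y x₀ = (2*r)^2 := by rw [Sf_eq_dist, hbeq]
    have hPf0 : Pf y m x₀ = 0 := by
      simp only [Pf, hSf, hmdef]
      field_simp
      ring
    have hW0 : W (x₀,t₀) = 0 := by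
      simp only [hWdef, Vb]
      have : Pf y m (x₀,t₀).1 = 0 := hPf0
      rw [this, zero_pow (by omega : k+2 ≠ 0), mul_zero]
    have huM : u (x₀,t₀) ≤ M₂ := hM₂ (x₀,t₀) (hKsub ⟨hx₀, ht₀⟩)
    have hcontra : 0 ≤ φ (x₀,t₀) := by
      simp only [hφdef, hW0]
      nlinarith
    exact absurd hcontra (not_le.mpr hneg)
  -- interior case
  have hx₀ball : x₀ ∈ ball y (2*r) := mem_ball.mpr hblt
  have ht₀mem : t₀ ∈ Ioo (0:ℝ) ((2*r)^2) := ⟨h0lt, lt_of_le_of_lt ht₀.2 hT1⟩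
  have hX₀open : (x₀,t₀) ∈ ball y (2*r) ×ˢ Ioo 0 ((2*r)^2) := ⟨hx₀ball, ht₀mem⟩
  obtain ⟨hu2, hut⟩ := hsol.1 (x₀,t₀) hX₀open
  have hLu := hsol.2 (x₀,t₀) hX₀open
  obtain ⟨hell, hbd⟩ := hcoef (x₀,t₀) h0lt
  have hSflt : Sf y x₀ < (2*r)^2 := by
    rw [Sf_eq_dist]
    nlinarith [dist_nonneg (x := x₀) (y := y)]
  have hp0 : 0 < Pf y m x₀ := by
    have h5 : m * Sf y x₀ < m * ((2*r)^2) := mul_lt_mul_of_pos_left hSflt hm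
    have h6 : m * ((2*r)^2) = 1 := by rw [hmdef]; field_simp; ring
    simp only [Pf]
    linarith
  have hp1 : Pf y m x₀ ≤ 1 := (hPf01 x₀ hx₀).2
  have hbar : Dt W (x₀,t₀) ≤ ∑ i, ∑ j, a (x₀,t₀) i j * D2 W (x₀,t₀) i j := by
    rw [hWdef]
    exact barrier_subsolution ν hν m hm k lam hlamdef hk y (x₀,t₀) a hell hbd hp0 hp1
  -- time derivative inequality
  have hWt := hasDerivAt_Vb_time y m lam (k+2) x₀ t₀
  have hφt : HasDerivAt (fun t => φ (x₀, t))
      (M₂ * (-(-lam * Real.exp (-lam*t₀) * (Pf y m x₀)^(k+2))) + ε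
        - deriv (fun t => u (x₀,t)) t₀) t₀ := by
    have h1 : HasDerivAt (fun t => M₂*(1 - W (x₀,t)))
        (M₂ * (-(-lam * Real.exp (-lam*t₀) * (Pf y m x₀)^(k+2)))) t₀ :=
      (hWt.const_sub 1).const_mul M₂
    have h2 : HasDerivAt (fun t : ℝ => ε*(1+t)) ε t₀ := by
      simpa using ((hasDerivAt_id t₀).const_add 1).const_mul ε
    exact (h1.add h2).sub hut.hasDerivAt
  have hφtmin : ∀ t ∈ Icc (0:ℝ) T', (fun t => φ (x₀,t)) t₀ ≤ (fun t => φ (x₀,t)) t :=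
    fun t ht => hmin (x₀,t) ⟨hx₀, ht⟩
  have hderivφ : deriv (fun t => φ (x₀,t)) t₀ ≤ 0 :=
    deriv_nonpos_endpoint hφt.differentiableAt h0lt ht₀.2 hφtmin
  rw [hφt.deriv] at hderivφ
  -- spatial second derivatives
  set usl : E n → ℝ := fun x => u (x, t₀) with husldef
  set Wsl : E n → ℝ := fun x => Vb y m lam (k+2) (x, t₀) with hWsldef
  have hWsl2 : ContDiffAt ℝ 2 Wsl x₀ := contDiffAt_Vb_slice y m lam (k+2) t₀ x₀
  have husl2 : ContDiffAt ℝ 2 usl x₀ := hu2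
  set fsl : E n → ℝ := fun x => (-M₂ * Wsl x + (M₂ + ε*(1+t₀))) - usl x with hfsldef
  have hfsleq : ∀ x, fsl x = φ (x, t₀) := by
    intro x
    simp only [hfsldef, hφdef, hWsldef, husldef, hWdef]
    ring
  have hfsl2 : ContDiffAt ℝ 2 fsl x₀ :=
    ((contDiffAt_const.mul hWsl2).add contDiffAt_const).sub husl2
  have hquad : ∀ ξ : E n, 0 ≤ fderiv ℝ (fderiv ℝ fsl) x₀ ξ ξ := by
    intro ξ
    apply second_deriv_nonneg_at_localmin hfsl2 ξ
    have hco : Continuous (fun s : ℝ => x₀ + s•ξ) :=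
      continuous_const.add (continuous_id.smul continuous_const)
    have h7 : (fun s:ℝ => x₀ + s•ξ) ⁻¹' (ball y (2*r)) ∈ nhds (0:ℝ) := by
      apply hco.continuousAt.preimage_mem_nhds
      apply isOpen_ball.mem_nhds
      simpa using hx₀ball
    filter_upwards [h7] with s hs
    have hzs : x₀ + (0:ℝ)•ξ = x₀ := by rw [zero_smul, add_zero]
    show fsl (x₀ + (0:ℝ)•ξ) ≤ fsl (x₀ + s•ξ)
    rw [hzs, hfsleq, hfsleq]
    exact hmin (x₀ + s•ξ, t₀) ⟨ball_subset_closedBall hs, ht₀⟩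
  have hsymm : IsSymmSndFDerivAt ℝ fsl x₀ := hfsl2.isSymmSndFDerivAt (by simp)
  have hcontr : 0 ≤ ∑ i, ∑ j, a (x₀,t₀) i j *
      (fderiv ℝ (fderiv ℝ fsl) x₀ (EuclideanSpace.single i 1) (EuclideanSpace.single j 1)) := by
    apply contraction_nonneg
    · intro ξ
      exact le_trans (mul_nonneg (le_of_lt hν) (Finset.sum_nonneg fun i _ => sq_nonneg _)) (hell ξ)
    · intro i j
      exact hsymm _ _
    · intro ξ
      have hζ := hquad (WithLp.toLp 2 ξ)
      rw [bilin_eq_sum] at hζ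
      exact hζ
  have hHdec : ∀ v w : E n, fderiv ℝ (fderiv ℝ fsl) x₀ v w
      = -M₂ * fderiv ℝ (fderiv ℝ Wsl) x₀ v w - fderiv ℝ (fderiv ℝ usl) x₀ v w :=
    fun v w => snd_fderiv_comb (-M₂) (M₂ + ε*(1+t₀)) hWsl2 husl2 v w
  have hD2W : ∀ i j, D2 W (x₀,t₀) i j
      = fderiv ℝ (fderiv ℝ Wsl) x₀ (EuclideanSpace.single i 1) (EuclideanSpace.single j 1) := by
    intro i j
    exact fderiv_fderiv_apply hWsl2 _ _
  have hD2u : ∀ i j, D2 u (x₀,t₀) i j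
      = fderiv ℝ (fderiv ℝ usl) x₀ (EuclideanSpace.single i 1) (EuclideanSpace.single j 1) := by
    intro i j
    exact fderiv_fderiv_apply husl2 _ _
  have hsum2 : ∑ i, ∑ j, a (x₀,t₀) i j *
      (fderiv ℝ (fderiv ℝ fsl) x₀ (EuclideanSpace.single i 1) (EuclideanSpace.single j 1))
      = -M₂ * (∑ i, ∑ j, a (x₀,t₀) i j * D2 W (x₀,t₀) i j)
        - ∑ i, ∑ j, a (x₀,t₀) i j * D2 u (x₀,t₀) i j := by
    have hterm : ∀ i j, a (x₀,t₀) i j *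
        (fderiv ℝ (fderiv ℝ fsl) x₀ (EuclideanSpace.single i 1) (EuclideanSpace.single j 1))
        = -M₂ * (a (x₀,t₀) i j * D2 W (x₀,t₀) i j) - a (x₀,t₀) i j * D2 u (x₀,t₀) i j := by
      intro i j
      rw [hHdec, hD2W, hD2u]
      ring
    calc ∑ i, ∑ j, a (x₀,t₀) i j *
        (fderiv ℝ (fderiv ℝ fsl) x₀ (EuclideanSpace.single i 1) (EuclideanSpace.single j 1))
        = ∑ i, ∑ j, (-M₂ * (a (x₀,t₀) i j * D2 W (x₀,t₀) i j)
            - a (x₀,t₀) i j * D2 u (x₀,t₀) i j) :=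
          Finset.sum_congr rfl fun i _ => Finset.sum_congr rfl fun j _ => hterm i j
      _ = _ := by
          simp only [Finset.sum_sub_distrib]
          congr 1
          rw [Finset.mul_sum]
          refine Finset.sum_congr rfl fun i _ => ?_
          rw [Finset.mul_sum]
  rw [hsum2] at hcontr
  have hLu' : ∑ i, ∑ j, a (x₀,t₀) i j * D2 u (x₀,t₀) i j = Dt u (x₀,t₀) := by
    unfold LVal at hLu
    linarith
  have hDtu_eq : Dt u (x₀,t₀) = deriv (fun t => u (x₀,t)) t₀ := rfl
  have hDtW_eq : Dt W (x₀,t₀) = -lam * Real.exp (-lam*t₀) * (Pf y m x₀)^(k+2) := by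
    rw [hWdef]
    exact Dt_Vb y m lam (k+2) (x₀,t₀)
  have hchain2 : -M₂ * (∑ i, ∑ j, a (x₀,t₀) i j * D2 W (x₀,t₀) i j)
      ≤ -M₂ * Dt W (x₀,t₀) := by nlinarith
  rw [hDtW_eq] at hchain2
  rw [← hDtu_eq] at hderivφ
  linarith

def kk (n : ℕ) (ν : ℝ) : ℕ := ⌈(n:ℝ)/(2*ν^2)⌉₊

def cc (n : ℕ) (ν : ℝ) : ℝ :=
  Real.exp (-((n:ℝ)*((kk n ν:ℝ)+2))/(2*ν)) * (3/4)^(kk n ν + 2)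

lemma cc_pos (n : ℕ) {ν : ℝ} (hν : 0 < ν) : 0 < cc n ν := by
  unfold cc
  positivity

lemma cc_lt_one (n : ℕ) {ν : ℝ} (hν : 0 < ν) : cc n ν < 1 := by
  unfold cc
  have hx : -((n:ℝ)*((kk n ν:ℝ)+2))/(2*ν) ≤ 0 := by
    have h0 : 0 ≤ ((n:ℝ)*((kk n ν:ℝ)+2))/(2*ν) := by positivity
    rw [neg_div]
    linarith
  have h1 : Real.exp (-((n:ℝ)*((kk n ν:ℝ)+2))/(2*ν)) ≤ 1 := by
    calc Real.exp (-((n:ℝ)*((kk n ν:ℝ)+2))/(2*ν)) ≤ Real.exp 0 := Real.exp_le_exp.mpr hx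
      _ = 1 := Real.exp_zero
  have h2 : ((3:ℝ)/4)^(kk n ν + 2) < 1 := by
    apply pow_lt_one₀ (by norm_num) (by norm_num) (by omega)
  have h3 : (0:ℝ) < Real.exp (-((n:ℝ)*((kk n ν:ℝ)+2))/(2*ν)) := Real.exp_pos _
  nlinarith [pow_nonneg (by norm_num : (0:ℝ) ≤ 3/4) (kk n ν + 2)]

set_option maxHeartbeats 1000000 in
lemma comparison {n : ℕ} {ν : ℝ} (hν : 0 < ν)
    (a : E n × ℝ → Fin n → Fin n → ℝ)
    (hcoef : ∀ X : E n × ℝ, 0 < X.2 →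
      (∀ ξ : Fin n → ℝ, ν * ∑ i, ξ i ^ 2 ≤ ∑ i, ∑ j, a X i j * ξ i * ξ j) ∧
      ∀ i j, |a X i j| ≤ ν⁻¹)
    (y : E n) (r : ℝ) (hr : 0 < r) (u : E n × ℝ → ℝ)
    (huc : ContinuousOn u (closedBall y (2*r) ×ˢ Icc 0 ((2*r)^2)))
    (hsol : SolvesL a u (ball y (2*r) ×ˢ Ioo 0 ((2*r)^2)))
    (hzero : ∀ x ∈ closedBall y (2*r), u (x, 0) = 0)
    (M₂ : ℝ) (hM₂0 : 0 ≤ M₂)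
    (hM₂ : ∀ X ∈ closedBall y (2*r) ×ˢ Icc 0 ((2*r)^2), u X ≤ M₂) :
    ∀ X ∈ ball y r ×ˢ Ioo 0 (r^2), u X ≤ (1 - cc n ν) * M₂ := by
  intro X hX
  obtain ⟨x, t⟩ := X
  obtain ⟨hx, ht⟩ := hX
  dsimp only at hx ht
  have hk : (n:ℝ)/(2*ν^2) ≤ ((kk n ν:ℕ):ℝ)+1 := by
    have h := Nat.le_ceil ((n:ℝ)/(2*ν^2))
    have : ((⌈(n:ℝ)/(2*ν^2)⌉₊ : ℕ):ℝ) = ((kk n ν : ℕ):ℝ) := by rw [kk]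
    linarith [this ▸ h]
  have hrr : r^2 < (2*r)^2 := by nlinarith
  have ht4 : t < (2*r)^2 := lt_trans ht.2 hrr
  have hT0 : 0 < (t + (2*r)^2)/2 := by nlinarith [ht.1]
  have hT1 : (t + (2*r)^2)/2 < (2*r)^2 := by linarith
  have htT : t ≤ (t + (2*r)^2)/2 := by linarith
  have hmem : (x,t) ∈ closedBall y (2*r) ×ˢ Icc 0 ((t + (2*r)^2)/2) := by
    refine ⟨?_, ⟨le_of_lt ht.1, htT⟩⟩
    have := mem_ball.mp hx
    exact mem_closedBall.mpr (by linarith)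
  have hεlim : ∀ ε > 0, u (x,t) ≤
      M₂ * (1 - Vb y (1/(4*r^2)) (2*(n:ℝ)*(((kk n ν:ℕ):ℝ)+2)*(1/(4*r^2))/ν) (kk n ν+2) (x,t)) + ε := by
    intro ε hε
    have h1t : (0:ℝ) < 1 + t := by linarith [ht.1]
    have hεt : 0 < ε/(1+t) := by positivity
    have hstep := stepA hν hk a hcoef y r hr u huc hsol hzero M₂ hM₂0 hM₂
      ((t + (2*r)^2)/2) hT0 hT1 (ε/(1+t)) hεt (x,t) hmem
    have h9 : (ε/(1+t))*(1+(x,t).2) = ε := by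
      have : (x,t).2 = t := rfl
      rw [this]
      field_simp
    rw [h9] at hstep
    exact hstep
  have hfin : u (x,t) ≤
      M₂ * (1 - Vb y (1/(4*r^2)) (2*(n:ℝ)*(((kk n ν:ℕ):ℝ)+2)*(1/(4*r^2))/ν) (kk n ν+2) (x,t)) :=
    le_of_forall_pos_le_add hεlim
  -- lower bound on the barrier
  have hVb_eq : Vb y (1/(4*r^2)) (2*(n:ℝ)*(((kk n ν:ℕ):ℝ)+2)*(1/(4*r^2))/ν) (kk n ν+2) (x,t)
      = Real.exp (-(2*(n:ℝ)*(((kk n ν:ℕ):ℝ)+2)*(1/(4*r^2))/ν)*t)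
        * (Pf y (1/(4*r^2)) x)^(kk n ν+2) := rfl
  have hSflt : Sf y x < r^2 := by
    rw [Sf_eq_dist]
    have h1 := mem_ball.mp hx
    nlinarith [dist_nonneg (x := x) (y := y)]
  have hPf34 : 3/4 ≤ Pf y (1/(4*r^2)) x := by
    have h5 : (1/(4*r^2)) * Sf y x ≤ (1/(4*r^2)) * r^2 :=
      mul_le_mul_of_nonneg_left (le_of_lt hSflt) (by positivity)
    have h6 : (1/(4*r^2)) * r^2 = 1/4 := by field_simp
    simp only [Pf]
    linarith
  have hPfpow : ((3:ℝ)/4)^(kk n ν+2) ≤ (Pf y (1/(4*r^2)) x)^(kk n ν+2) :=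
    pow_le_pow_left₀ (by norm_num) hPf34 _
  have hlamr : (2*(n:ℝ)*(((kk n ν:ℕ):ℝ)+2)*(1/(4*r^2))/ν) * r^2 = ((n:ℝ)*((kk n ν:ℝ)+2))/(2*ν) := by
    field_simp
    ring
  have hexplb : Real.exp (-((n:ℝ)*((kk n ν:ℝ)+2))/(2*ν))
      ≤ Real.exp (-(2*(n:ℝ)*(((kk n ν:ℕ):ℝ)+2)*(1/(4*r^2))/ν)*t) := by
    apply Real.exp_le_exp.mpr
    have hlam0 : 0 ≤ 2*(n:ℝ)*(((kk n ν:ℕ):ℝ)+2)*(1/(4*r^2))/ν := by positivity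
    have h7 : (2*(n:ℝ)*(((kk n ν:ℕ):ℝ)+2)*(1/(4*r^2))/ν)*t
        ≤ (2*(n:ℝ)*(((kk n ν:ℕ):ℝ)+2)*(1/(4*r^2))/ν)*r^2 :=
      mul_le_mul_of_nonneg_left (le_of_lt ht.2) hlam0
    rw [hlamr] at h7
    rw [neg_div]
    linarith
  have hVlb : cc n ν ≤ Vb y (1/(4*r^2)) (2*(n:ℝ)*(((kk n ν:ℕ):ℝ)+2)*(1/(4*r^2))/ν) (kk n ν+2) (x,t) := by
    rw [hVb_eq]
    unfold cc
    apply mul_le_mul hexplb hPfpow (by positivity) (le_of_lt (Real.exp_pos _))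
  nlinarith [hfin, hVlb, hM₂0]

lemma half {n : ℕ} {ν : ℝ} (hν : ν ∈ Ioc (0 : ℝ) 1)
    (a : E n × ℝ → Fin n → Fin n → ℝ)
    (ha : IsParabolicCoeff ν a (closure (Cyl (univ : Set (E n)))))
    (y : E n) (r : ℝ) (hr : 0 < r) (u : E n × ℝ → ℝ)
    (hc : ContinuousOn u (closure (Cyl (univ : Set (E n)) ∩ Cr (y, 0) (2 * r))))
    (hb : ∃ M : ℝ, ∀ X ∈ closure (Cyl (univ : Set (E n)) ∩ Cr (y, 0) (2 * r)), |u X| ≤ M)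
    (hs : SolvesL a u (Cyl (univ : Set (E n)) ∩ Cr (y, 0) (2 * r)))
    (hz : ∀ Z ∈ ball y (2 * r) ×ˢ {(0 : ℝ)}, u Z = 0) :
    sSup ((fun X => max (u X) 0) '' (Cyl (univ : Set (E n)) ∩ Cr (y, 0) r)) ≤
      (1 - cc n ν) * sSup ((fun X => max (u X) 0) ''
        (Cyl (univ : Set (E n)) ∩ Cr (y, 0) (2 * r))) := by
  obtain ⟨hν0, hν1⟩ := hν
  have hset : ∀ R : ℝ, Cyl (univ : Set (E n)) ∩ Cr (y,0) R = ball y R ×ˢ Ioo 0 (R^2) := by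
    intro R
    ext ⟨x,t⟩
    simp only [Cyl, CylFrom, Cr, CRr, mem_inter_iff, mem_prod, mem_univ, true_and,
      mem_Ioi, mem_Ioo, mem_ball]
    constructor
    · rintro ⟨h1, h2, _, h4⟩
      exact ⟨h2, h1, by linarith⟩
    · rintro ⟨h1, h2, h3⟩
      exact ⟨h2, h1, by nlinarith [sq_nonneg R], by linarith⟩
  have hclo : closure (ball y (2*r) ×ˢ Ioo (0:ℝ) ((2*r)^2))
      = closedBall y (2*r) ×ˢ Icc 0 ((2*r)^2) := by
    rw [closure_prod_eq, closure_ball y (by positivity), closure_Ioo (by positivity)]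
  have h2r : Cyl (univ : Set (E n)) ∩ Cr (y,0) (2*r) = ball y (2*r) ×ˢ Ioo 0 ((2*r)^2) := hset (2*r)
  have h1r : Cyl (univ : Set (E n)) ∩ Cr (y,0) r = ball y r ×ˢ Ioo 0 (r^2) := hset r
  obtain ⟨M, hM⟩ := hb
  have himgsub : ∀ z ∈ (fun X => max (u X) 0) '' (Cyl (univ : Set (E n)) ∩ Cr (y,0) (2*r)),
      z ≤ max M 0 := by
    rintro z ⟨X, hXmem, rfl⟩
    have h1 := hM X (subset_closure hXmem)
    exact max_le_max (le_trans (le_abs_self _) h1) le_rfl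
  have hbdd : BddAbove ((fun X => max (u X) 0) '' (Cyl (univ : Set (E n)) ∩ Cr (y,0) (2*r))) :=
    ⟨max M 0, himgsub⟩
  set M₂ := sSup ((fun X => max (u X) 0) '' (Cyl (univ : Set (E n)) ∩ Cr (y,0) (2*r))) with hM₂def
  have hne2 : (y, r^2) ∈ Cyl (univ : Set (E n)) ∩ Cr (y,0) (2*r) := by
    rw [h2r]
    refine ⟨mem_ball_self (by positivity), ?_, ?_⟩
    · show (0:ℝ) < r^2
      positivity
    · show (r^2:ℝ) < (2*r)^2
      nlinarith
  have hM₂0 : 0 ≤ M₂ :=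
    le_trans (le_max_right _ _) (le_csSup hbdd ⟨(y,r^2), hne2, rfl⟩)
  have hM₂u : ∀ X ∈ ball y (2*r) ×ˢ Ioo 0 ((2*r)^2), u X ≤ M₂ := by
    intro X hX
    rw [← h2r] at hX
    exact le_trans (le_max_left _ _) (le_csSup hbdd ⟨X, hX, rfl⟩)
  have hccl : ContinuousOn u (closedBall y (2*r) ×ˢ Icc 0 ((2*r)^2)) := by
    rw [← hclo, ← h2r]
    exact hc
  have hMcl : ∀ X ∈ closedBall y (2*r) ×ˢ Icc 0 ((2*r)^2), u X ≤ M₂ := by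
    rw [← hclo]
    exact le_on_closure (by rw [hclo]; exact hccl) hM₂u
  have hz' : ∀ x ∈ closedBall y (2*r), u (x,0) = 0 := by
    have hcb : closedBall y (2*r) = closure (ball y (2*r)) :=
      (closure_ball y (by positivity)).symm
    rw [hcb]
    refine eq_zero_on_closure (f := fun x => u (x,0)) (s := ball y (2*r)) ?_ ?_
    · rw [← hcb]
      refine hccl.comp (Continuous.continuousOn (continuous_id.prodMk continuous_const)) ?_
      intro x hx
      exact ⟨hx, le_rfl, by positivity⟩
    · intro x hx
      exact hz (x, 0) ⟨hx, rfl⟩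
  have hsol' : SolvesL a u (ball y (2*r) ×ˢ Ioo 0 ((2*r)^2)) := by
    rw [← h2r]
    exact hs
  have hcoef : ∀ X : E n × ℝ, 0 < X.2 →
      (∀ ξ : Fin n → ℝ, ν * ∑ i, ξ i ^ 2 ≤ ∑ i, ∑ j, a X i j * ξ i * ξ j) ∧
      ∀ i j, |a X i j| ≤ ν⁻¹ := by
    intro X hX2
    have hXmem : X ∈ closure (Cyl (univ : Set (E n))) :=
      subset_closure ⟨mem_univ _, hX2⟩
    exact ha.2 X hXmem
  have hcomp := comparison hν0 a hcoef y r hr u hccl hsol' hz' M₂ hM₂0 hMcl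
  have hθ0 : 0 ≤ 1 - cc n ν := by linarith [cc_lt_one n hν0]
  apply Real.sSup_le
  · rintro z ⟨X, hXmem, rfl⟩
    rw [h1r] at hXmem
    exact max_le (hcomp X hXmem) (mul_nonneg hθ0 hM₂0)
  · exact mul_nonneg hθ0 hM₂0

end VDWS

/-- **Corollary 4.2 (whole space)**: if `u` is continuous and bounded on
`cl(Q_{2r}(Y))`, solves `Lu = 0` in `Q_{2r}(Y)` (with `Q = ℝⁿ × (0,∞)`,
`Y = (y,0)`), and vanishes on `Δ_{2r}(Y) = B_{2r}(y) × {0}`, then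
`sup_{Q_r(Y)} u^± ≤ θ · sup_{Q_{2r}(Y)} u^±` with `θ = θ(n, ν) ∈ (0,1)`. -/
theorem vanishing_decay_whole_space (n : ℕ) (hn : 1 ≤ n) (ν : ℝ)
    (hν : ν ∈ Ioc (0 : ℝ) 1) :
    ∃ θ : ℝ, θ ∈ Ioo (0 : ℝ) 1 ∧
      ∀ (a : E n × ℝ → Fin n → Fin n → ℝ),
        IsParabolicCoeff ν a (closure (Cyl (univ : Set (E n)))) →
      ∀ (y : E n) (r : ℝ), 0 < r →
      ∀ u : E n × ℝ → ℝ,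
        ContinuousOn u (closure (Cyl (univ : Set (E n)) ∩ Cr (y, 0) (2 * r))) →
        (∃ M : ℝ, ∀ X ∈ closure (Cyl (univ : Set (E n)) ∩ Cr (y, 0) (2 * r)),
          |u X| ≤ M) →
        SolvesL a u (Cyl (univ : Set (E n)) ∩ Cr (y, 0) (2 * r)) →
        (∀ Z ∈ ball y (2 * r) ×ˢ {(0 : ℝ)}, u Z = 0) →
        (sSup ((fun X => max (u X) 0) '' (Cyl (univ : Set (E n)) ∩ Cr (y, 0) r)) ≤
          θ * sSup ((fun X => max (u X) 0) ''
            (Cyl (univ : Set (E n)) ∩ Cr (y, 0) (2 * r)))) ∧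
        (sSup ((fun X => max (-u X) 0) '' (Cyl (univ : Set (E n)) ∩ Cr (y, 0) r)) ≤
          θ * sSup ((fun X => max (-u X) 0) ''
            (Cyl (univ : Set (E n)) ∩ Cr (y, 0) (2 * r)))) := by
  
  refine ⟨1 - VDWS.cc n ν, ⟨by linarith [VDWS.cc_lt_one n hν.1], by linarith [VDWS.cc_pos n hν.1]⟩, ?_⟩
  intro a ha y r hr u hc hb hs hz
  constructor
  · exact VDWS.half hν a ha y r hr u hc hb hs hz
  · have hz' : ∀ Z ∈ ball y (2*r) ×ˢ {(0:ℝ)}, (fun X => -u X) Z = 0 := by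
      intro Z hZ
      simp [hz Z hZ]
    obtain ⟨M, hM⟩ := hb
    have hb' : ∃ M : ℝ, ∀ X ∈ closure (Cyl (univ : Set (E n)) ∩ Cr (y, 0) (2 * r)),
        |(fun X => -u X) X| ≤ M := ⟨M, fun X hX => by simpa using hM X hX⟩
    exact VDWS.half hν a ha y r hr (fun X => -u X) hc.neg hb' (VDWS.SolvesL_neg hs) hz'
end
end

section
/- Let Ω ⊂ ℝⁿ be a Lipschitz domain with constants m, r₀, let Q = Ω × (0,∞), let L be a nondivergence parabolic operator on Q with ellipticity constant ν, and let Y = (y,s) ∈ ∂_pQ. Let u be a bounded solution of Lu = 0 in Q, continuous on cl(Q), satisfying u ≥ 0 on U'_R = Q ∩ {(x,t) : |x−y| ≤ K√(t−s), ρ₀ ≤ √(t−s) ≤ R} and u = 0 at every point of (∂_pQ) ∖ C_{ρ₀/2}(Y), where K ≥ 8 and 0 < ρ₀ ≤ R. Define f₂(ρ) = sup of u⁻ = max(−u,0) over S_ρ = Q ∩ {(x,t) : |x−y| = Kρ, |t−s| < ρ²}. Then there is a constant γ₂ = γ₂(n,ν,m,K) > 0 such that f₂(ρ) ≤ (2ρ₀/ρ)^{γ₂}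 · f₂(ρ₀) for all ρ₀ ≤ ρ ≤ R; moreover γ₂ can be taken with γ₂ ≥ c·K for a constant c = c(n,ν,m) > 0, so that γ₂ → ∞ as K → ∞. -/
open MeasureTheory Set Metric Filter

noncomputable section

lemma trace_quadform_nonneg {n : ℕ} (a H : Fin n → Fin n → ℝ)
    (hsym : ∀ i j, H i j = H j i)
    (hpsd : ∀ ξ : Fin n → ℝ, 0 ≤ ∑ i, ∑ j, ξ i * ξ j * H i j)
    (hell : ∀ ξ : Fin n → ℝ, 0 ≤ ∑ i, ∑ j, a i j * ξ i * ξ j) :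
    0 ≤ ∑ i, ∑ j, a i j * H i j := by
  classical
  set Hm : Matrix (Fin n) (Fin n) ℝ := Matrix.of H with hHm
  have hHerm : Hm.IsHermitian := by
    ext i j
    simpa [Hm, Matrix.conjTranspose_apply] using (hsym j i)
  have hpsdM : Hm.PosSemidef := by
    refine Matrix.PosSemidef.of_dotProduct_mulVec_nonneg hHerm fun x => ?_
    have := hpsd x
    simpa [dotProduct, Matrix.mulVec, Finset.mul_sum, mul_assoc, Hm,
      mul_comm, mul_left_comm] using this
  obtain ⟨B, hBB⟩ : ∃ B : Matrix (Fin n) (Fin n) ℝ, Hm = star B * B := by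
    open scoped MatrixOrder in
    exact CStarAlgebra.nonneg_iff_eq_star_mul_self.mp hpsdM.nonneg
  have hH : ∀ i j, H i j = ∑ k, B k i * B k j := by
    intro i j
    have := congrArg (fun M => M i j) hBB
    simpa [Matrix.mul_apply, Hm, Matrix.star_apply] using this
  calc (0:ℝ) ≤ ∑ k, ∑ i, ∑ j, a i j * (B k i * B k j) := by
        apply Finset.sum_nonneg
        intro k _
        have := hell (fun i => B k i)
        simpa [mul_assoc] using this
    _ = ∑ i, ∑ j, a i j * H i j := by
        rw [Finset.sum_comm]
        refine Finset.sum_congr rfl fun i _ => ?_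
        rw [Finset.sum_comm]
        refine Finset.sum_congr rfl fun j _ => ?_
        rw [hH i j, Finset.mul_sum]

lemma deriv_nonpos_of_min_right {f : ℝ → ℝ} {a b d : ℝ} (hab : a < b)
    (hd : HasDerivAt f d b) (hmin : ∀ t ∈ Set.Ico a b, f b ≤ f t) : d ≤ 0 := by
  have hslope := hasDerivAt_iff_tendsto_slope.1 hd
  have hslope' : Tendsto (slope f b) (nhdsWithin b (Set.Iio b)) (nhds d) :=
    hslope.mono_left (nhdsWithin_mono b (fun t ht => ne_of_lt ht))
  refine le_of_tendsto hslope' ?_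
  filter_upwards [Ioo_mem_nhdsLT_of_mem (show b ∈ Set.Ioc a b from ⟨hab, le_refl b⟩)]
  intro t ht
  have h1 : f b ≤ f t := hmin t ⟨le_of_lt ht.1, ht.2⟩
  have h2 : t - b < 0 := by linarith [ht.2]
  rw [slope_def_field]
  have : f t - f b ≥ 0 := by linarith
  exact div_nonpos_of_nonneg_of_nonpos this (le_of_lt h2)

lemma second_deriv_nonneg_of_isLocalMin {g g₁ : ℝ → ℝ} {c : ℝ}
    (hmin : IsLocalMin g 0) (hg : ∀ᶠ τ in nhds (0:ℝ), HasDerivAt g (g₁ τ) τ)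
    (hg₁ : HasDerivAt g₁ c 0) : 0 ≤ c := by
  by_contra hc
  push_neg at hc
  have h0 : g₁ 0 = 0 := hmin.hasDerivAt_eq_zero hg.self_of_nhds
  have hslope := hasDerivAt_iff_tendsto_slope.1 hg₁
  have hslope' : Tendsto (slope g₁ 0) (nhdsWithin 0 (Set.Ioi 0)) (nhds c) :=
    hslope.mono_left (nhdsWithin_mono 0 (fun t ht => ne_of_gt ht))
  have hneg : ∀ᶠ τ in nhdsWithin 0 (Set.Ioi 0), slope g₁ 0 τ < 0 :=
    hslope'.eventually_lt_const hc
  have hneg' : ∀ᶠ τ in nhds (0:ℝ), τ ∈ Set.Ioi (0:ℝ) → slope g₁ 0 τ < 0 :=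
    eventually_nhdsWithin_iff.mp hneg
  obtain ⟨δ₁, hδ₁, hδ₁p⟩ := Metric.eventually_nhds_iff.1 hg
  obtain ⟨δ₂, hδ₂, hδ₂p⟩ :=
    Metric.eventually_nhds_iff.1 (show ∀ᶠ x in nhds (0:ℝ), g 0 ≤ g x from hmin)
  obtain ⟨δ₃, hδ₃, hδ₃p⟩ := Metric.eventually_nhds_iff.1 hneg'
  set δ := min (min δ₁ δ₂) δ₃ / 2 with hδdef
  have hδpos : 0 < δ := by positivity
  have hm1 := min_le_left (min δ₁ δ₂) δ₃
  have hm2 := min_le_right (min δ₁ δ₂) δ₃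
  have hm3 := min_le_left δ₁ δ₂
  have hm4 := min_le_right δ₁ δ₂
  have hδ1 : δ < δ₁ := by simp only [hδdef]; linarith
  have hδ2 : δ < δ₂ := by simp only [hδdef]; linarith
  have hδu : δ < δ₃ := by simp only [hδdef]; linarith
  have hg₁neg : ∀ τ ∈ Set.Ioo (0:ℝ) δ, g₁ τ < 0 := by
    intro τ hτ
    have hd : dist τ (0:ℝ) < δ₃ := by
      simp only [Real.dist_eq, sub_zero]
      rw [abs_of_pos hτ.1]; linarith [hτ.2]
    have := hδ₃p hd hτ.1
    rw [slope_def_field, h0] at this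
    have hq : (g₁ τ - 0) / (τ - 0) < 0 := by simpa using this
    have h2 := mul_neg_of_neg_of_pos hq (show (0:ℝ) < τ - 0 by simpa using hτ.1)
    rw [div_mul_cancel₀] at h2
    · linarith
    · simpa using ne_of_gt hτ.1
  have hbpos : 0 < δ / 2 := by positivity
  have hderiv : ∀ t ∈ Set.Icc (0:ℝ) (δ/2), HasDerivAt g (g₁ t) t := by
    intro t ht
    apply hδ₁p
    simp only [Real.dist_eq, sub_zero]
    rw [abs_of_nonneg ht.1]; linarith [ht.2]
  have hcont : ContinuousOn g (Set.Icc 0 (δ/2)) := fun t ht =>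
    (hderiv t ht).continuousAt.continuousWithinAt
  obtain ⟨ξ, hξ, hξeq⟩ := exists_hasDerivAt_eq_slope g g₁ hbpos hcont
    (fun t ht => hderiv t ⟨le_of_lt ht.1, le_of_lt ht.2⟩)
  have hξneg : g₁ ξ < 0 := hg₁neg ξ ⟨hξ.1, by linarith [hξ.2]⟩
  have hmono : g (δ/2) < g 0 := by
    have h1 : (g (δ/2) - g 0) / (δ/2 - 0) < 0 := by rw [← hξeq]; exact hξneg
    have h2 := mul_neg_of_neg_of_pos h1 (by linarith : (0:ℝ) < δ/2 - 0)
    rw [div_mul_cancel₀] at h2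
    · linarith
    · linarith
  have : g 0 ≤ g (δ/2) := by
    apply hδ₂p
    simp only [Real.dist_eq, sub_zero]
    rw [abs_of_nonneg (le_of_lt hbpos)]
    linarith
  linarith

lemma elliptic_term_nonneg {n : ℕ} (u : E n × ℝ → ℝ) (X : E n × ℝ)
    (hx : ContDiffAt ℝ 2 (fun x => u (x, X.2)) X.1)
    (hmin : IsLocalMin (fun x => u (x, X.2)) X.1)
    (a : Fin n → Fin n → ℝ)
    (hell : ∀ ξ : Fin n → ℝ, 0 ≤ ∑ i, ∑ j, a i j * ξ i * ξ j) :
    0 ≤ ∑ i, ∑ j, a i j * D2 u X i j := by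
  classical
  set h : E n → ℝ := fun x => u (x, X.2) with hh
  set x₀ := X.1 with hx₀
  have hd2 : ContDiffAt ℝ 1 (fderiv ℝ h) x₀ := hx.fderiv_right (by norm_num)
  have hdiff2 : DifferentiableAt ℝ (fderiv ℝ h) x₀ := hd2.differentiableAt one_ne_zero
  set B := fderiv ℝ (fderiv ℝ h) x₀ with hB
  -- derivative of x ↦ fderiv h x w
  have hFw : ∀ w : E n, HasFDerivAt (fun x => fderiv ℝ h x w) (B.flip w) x₀ := by
    intro w
    have h1 := hdiff2.hasFDerivAt.clm_apply (hasFDerivAt_const w x₀)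
    simpa using h1
  -- identification of D2 with B
  have hD2 : ∀ i j, D2 u X i j
      = B (EuclideanSpace.single i 1) (EuclideanSpace.single j 1) := by
    intro i j
    have := (hFw (EuclideanSpace.single j 1)).fderiv
    simp only [D2, ← hh, ← hx₀, this]
    rfl
  -- symmetry
  have hsymB : ∀ v w : E n, B v w = B w v := by
    intro v w
    exact (hx.isSymmSndFDerivAt (by simp [minSmoothness_of_isRCLikeNormedField])).eq v w
  -- positive semidefiniteness
  have hpsdB : ∀ w : E n, 0 ≤ B w w := by
    intro w
    set γ : ℝ → E n := fun τ => x₀ + τ • w with hγ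
    have hγd : ∀ τ : ℝ, HasDerivAt γ w τ := by
      intro τ
      simpa [hγ] using ((hasDerivAt_id τ).smul_const w).const_add x₀
    have hγ0 : γ 0 = x₀ := by simp [hγ]
    have htend : Tendsto γ (nhds 0) (nhds x₀) := by
      rw [← hγ0]; exact (hγd 0).continuousAt.tendsto
    have hming : IsLocalMin (fun τ => h (γ τ)) 0 := by
      have h2 : ∀ᶠ τ in nhds (0:ℝ), h (γ 0) ≤ h (γ τ) := by
        rw [hγ0]; exact htend.eventually hmin
      exact h2
    have hediff : ∀ᶠ τ in nhds (0:ℝ), DifferentiableAt ℝ h (γ τ) := by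
      have hev : ∀ᶠ y in nhds x₀, ContDiffAt ℝ 2 h y := hx.eventually (by simp)
      have := htend.eventually hev
      filter_upwards [this] with τ hτ
      exact hτ.differentiableAt (by norm_num)
    have hg : ∀ᶠ τ in nhds (0:ℝ), HasDerivAt (fun τ => h (γ τ)) (fderiv ℝ h (γ τ) w) τ := by
      filter_upwards [hediff] with τ hτ
      exact hτ.hasFDerivAt.comp_hasDerivAt τ (hγd τ)
    have hg₁ : HasDerivAt (fun τ => fderiv ℝ h (γ τ) w) (B w w) 0 := by
      have hFw0 : HasFDerivAt (fun x => fderiv ℝ h x w) (B.flip w) (γ 0) := by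
        rw [hγ0]; exact hFw w
      have h3 := hFw0.comp_hasDerivAt 0 (hγd 0)
      exact h3
    exact second_deriv_nonneg_of_isLocalMin hming hg hg₁
  -- conclude via trace lemma
  have := trace_quadform_nonneg a
    (fun i j => B (EuclideanSpace.single i 1) (EuclideanSpace.single j 1))
    (fun i j => hsymB _ _)
    (fun ξ => by
      set e : Fin n → E n := fun i => EuclideanSpace.single i 1 with he
      have hexp1 : ∀ v : E n, B v (∑ j, ξ j • e j) = ∑ j, ξ j * B v (e j) := by
        intro v
        rw [map_sum]
        exact Finset.sum_congr rfl fun j _ => by rw [_root_.map_smul]; simp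
      have hexp2 : ∀ w : E n, B (∑ i, ξ i • e i) w = ∑ i, ξ i * B (e i) w := by
        intro w
        rw [map_sum, ContinuousLinearMap.sum_apply]
        exact Finset.sum_congr rfl fun i _ => by rw [_root_.map_smul]; simp
      have hexp : B (∑ i, ξ i • e i) (∑ j, ξ j • e j)
          = ∑ i, ∑ j, ξ i * ξ j * B (e i) (e j) := by
        rw [hexp2]
        refine Finset.sum_congr rfl fun i _ => ?_
        rw [hexp1, Finset.mul_sum]
        exact Finset.sum_congr rfl fun j _ => by ring
      rw [← hexp]
      exact hpsdB _)
    hell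
  calc (0:ℝ) ≤ _ := this
  _ = ∑ i, ∑ j, a i j * D2 u X i j := by
      refine Finset.sum_congr rfl fun i _ => Finset.sum_congr rfl fun j _ => ?_
      rw [hD2]

/-- Parabolic minimum principle for strict supersolutions on a bounded product region. -/
lemma min_principle {n : ℕ} (a : E n × ℝ → Fin n → Fin n → ℝ)
    (W : Set (E n)) (hWo : IsOpen W) (hWb : Bornology.IsBounded W)
    {t₁ t₂ : ℝ} (hlt : t₁ < t₂) (v : E n × ℝ → ℝ)
    (hvc : ContinuousOn v (closure W ×ˢ Icc t₁ t₂))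
    (hell : ∀ X ∈ W ×ˢ Ioc t₁ t₂, ∀ ξ : Fin n → ℝ,
      0 ≤ ∑ i, ∑ j, a X i j * ξ i * ξ j)
    (hsm : ∀ X ∈ W ×ˢ Ioc t₁ t₂, ContDiffAt ℝ 2 (fun x => v (x, X.2)) X.1 ∧
      DifferentiableAt ℝ (fun t => v (X.1, t)) X.2)
    (hsub : ∀ X ∈ W ×ˢ Ioc t₁ t₂,
      (∑ i, ∑ j, a X i j * D2 v X i j) - Dt v X < 0)
    (hbdry : ∀ X : E n × ℝ, X.1 ∈ frontier W → X.2 ∈ Icc t₁ t₂ → 0 ≤ v X)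
    (hbot : ∀ X : E n × ℝ, X.1 ∈ closure W → X.2 = t₁ → 0 ≤ v X) :
    ∀ X : E n × ℝ, X.1 ∈ closure W → X.2 ∈ Icc t₁ t₂ → 0 ≤ v X := by
  intro X hX1 hX2
  by_contra hneg
  push_neg at hneg
  set S : Set (E n × ℝ) := closure W ×ˢ Icc t₁ t₂ with hS
  have hScomp : IsCompact S := hWb.isCompact_closure.prod isCompact_Icc
  have hSne : S.Nonempty := ⟨X, ⟨hX1, hX2⟩⟩
  obtain ⟨Z, hZS, hZmin⟩ := hScomp.exists_isMinOn hSne hvc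
  have hvZ : v Z < 0 := lt_of_le_of_lt (hZmin ⟨hX1, hX2⟩) hneg
  -- Z is interior in space
  have hZ1 : Z.1 ∈ W := by
    by_contra h
    have : Z.1 ∈ frontier W := by
      have := hZS.1
      rw [← hWo.interior_eq] at h
      exact ⟨this, h⟩
    exact absurd (hbdry Z this hZS.2) (not_le.2 hvZ)
  have hZ2 : Z.2 ∈ Ioc t₁ t₂ := by
    rcases eq_or_lt_of_le hZS.2.1 with h | h
    · exact absurd (hbot Z hZS.1 h.symm) (not_le.2 hvZ)
    · exact ⟨h, hZS.2.2⟩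
  have hZmem : Z ∈ W ×ˢ Ioc t₁ t₂ := ⟨hZ1, hZ2⟩
  obtain ⟨hsmx, hsmt⟩ := hsm Z hZmem
  -- spatial local min
  have hlocmin : IsLocalMin (fun x => v (x, Z.2)) Z.1 := by
    have hWn : W ∈ nhds Z.1 := hWo.mem_nhds hZ1
    filter_upwards [hWn] with x hx
    exact hZmin (⟨subset_closure hx, hZS.2⟩ : (x, Z.2) ∈ S)
  have hEll : 0 ≤ ∑ i, ∑ j, a Z i j * D2 v Z i j :=
    elliptic_term_nonneg v Z hsmx hlocmin (a Z) (hell Z hZmem)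
  -- time derivative ≤ 0
  have hDt : Dt v Z ≤ 0 := by
    have hder : HasDerivAt (fun t => v (Z.1, t)) (Dt v Z) Z.2 := hsmt.hasDerivAt
    rcases eq_or_lt_of_le hZ2.2 with htop | htop
    · refine deriv_nonpos_of_min_right (f := fun t => v (Z.1, t)) hlt ?_ ?_
      · rw [htop] at hder; exact hder
      · intro t ht
        have h1 : (Z.1, t) ∈ S := ⟨hZS.1, ⟨ht.1, le_of_lt ht.2⟩⟩
        have h2 := hZmin h1
        show v (Z.1, t₂) ≤ v (Z.1, t)
        rw [← htop]
        simpa using h2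
    · have hloc : IsLocalMin (fun t => v (Z.1, t)) Z.2 := by
        have : Icc t₁ t₂ ∈ nhds Z.2 := Icc_mem_nhds hZ2.1 htop
        filter_upwards [this] with t ht
        exact hZmin (⟨hZS.1, ht⟩ : (Z.1, t) ∈ S)
      exact le_of_eq (hloc.hasDerivAt_eq_zero hder)
  have := hsub Z hZmem
  linarith

/-! ### The quadratic function -/

def qf {n : ℕ} (y : E n) : E n → ℝ := fun x => ∑ i, (x i - y i)^2

def Lq {n : ℕ} (y : E n) (x : E n) : E n →L[ℝ] ℝ :=
  ∑ i, (2*(x i - y i)) • (EuclideanSpace.proj i : E n →L[ℝ] ℝ)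

lemma qf_nonneg {n : ℕ} (y : E n) (x : E n) : 0 ≤ qf y x :=
  Finset.sum_nonneg fun i _ => sq_nonneg _

lemma qf_eq_norm {n : ℕ} (y : E n) (x : E n) : qf y x = ‖x - y‖^2 := by
  rw [EuclideanSpace.norm_eq, Real.sq_sqrt (by positivity)]
  refine Finset.sum_congr rfl fun i _ => ?_
  have : (x - y) i = x i - y i := rfl
  rw [this, Real.norm_eq_abs, sq_abs]

lemma hasFDerivAt_qf {n : ℕ} (y : E n) (x : E n) :
    HasFDerivAt (qf y) (Lq y x) x := by
  apply HasFDerivAt.fun_sum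
  intro i _
  have h1 : HasFDerivAt (fun x : E n => x i - y i)
      (EuclideanSpace.proj i : E n →L[ℝ] ℝ) x :=
    (EuclideanSpace.proj i : E n →L[ℝ] ℝ).hasFDerivAt.sub_const (y i)
  have heq : (fun x : E n => (x i - y i)^2) = fun x => (x i - y i)*(x i - y i) := by
    funext x; ring
  rw [heq]
  have h2 := h1.mul h1
  exact h2.congr_fderiv (by rw [two_mul, add_smul])

lemma Lq_single {n : ℕ} (y : E n) (x : E n) (j : Fin n) :
    (Lq y x) (EuclideanSpace.single j 1) = 2*(x j - y j) := by
  simp only [Lq, ContinuousLinearMap.sum_apply, ContinuousLinearMap.smul_apply]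
  have : ∀ i : Fin n, (EuclideanSpace.proj i : E n →L[ℝ] ℝ) (EuclideanSpace.single j 1)
      = if i = j then 1 else 0 := by
    intro i
    have : (EuclideanSpace.proj i : E n →L[ℝ] ℝ) (EuclideanSpace.single j 1)
        = (EuclideanSpace.single j (1:ℝ)) i := rfl
    rw [this, EuclideanSpace.single_apply]
  simp only [this, smul_eq_mul, mul_ite, mul_one, mul_zero]
  rw [Finset.sum_ite_eq' Finset.univ j fun i => 2 * (x i - y i)]
  simp

lemma contDiff_qf {n : ℕ} (y : E n) : ContDiff ℝ 2 (qf y) := by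
  apply ContDiff.sum
  intro i _
  have h1 : ContDiff ℝ 2 (fun x : E n => x i - y i) :=
    ((EuclideanSpace.proj i : E n →L[ℝ] ℝ).contDiff).sub contDiff_const
  exact h1.pow 2

/-! ### Spatial exp-quadratic computations, generic constants -/

section SliceExp
variable {n : ℕ} (y : E n) (A c : ℝ)

lemma hasFDerivAt_sliceExp (x : E n) :
    HasFDerivAt (fun x => A * Real.exp (c * qf y x))
      ((A * Real.exp (c * qf y x) * c) • Lq y x) x := by
  have h1 := ((hasFDerivAt_qf y x).const_mul c).exp.const_mul A
  have : A • (Real.exp (c * qf y x) • (c • Lq y x)) = (A * Real.exp (c * qf y x) * c) • Lq y x := by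
    rw [smul_smul, smul_smul, mul_assoc]
  rwa [this] at h1

lemma fderiv_sliceExp_single (x : E n) (j : Fin n) :
    fderiv ℝ (fun x => A * Real.exp (c * qf y x)) x (EuclideanSpace.single j 1)
      = A * Real.exp (c * qf y x) * (c * (2*(x j - y j))) := by
  rw [(hasFDerivAt_sliceExp y A c x).fderiv]
  simp only [ContinuousLinearMap.smul_apply, Lq_single, smul_eq_mul]
  ring

lemma hasFDerivAt_dirExp (x : E n) (j : Fin n) :
    HasFDerivAt (fun x => A * Real.exp (c * qf y x) * (c * (2*(x j - y j))))
      ((A * Real.exp (c * qf y x)) • (c • ((2:ℝ) • (EuclideanSpace.proj j : E n →L[ℝ] ℝ)))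
        + (c * (2*(x j - y j))) • ((A * Real.exp (c * qf y x) * c) • Lq y x)) x := by
  have hg : HasFDerivAt (fun x : E n => c * (2*(x j - y j)))
      (c • ((2:ℝ) • (EuclideanSpace.proj j : E n →L[ℝ] ℝ))) x := by
    exact (((EuclideanSpace.proj j : E n →L[ℝ] ℝ).hasFDerivAt.sub_const (y j)).const_mul
      2).const_mul c
  exact (hasFDerivAt_sliceExp y A c x).mul hg

lemma contDiff_sliceExp : ContDiff ℝ 2 (fun x => A * Real.exp (c * qf y x)) := by
  apply ContDiff.mul contDiff_const
  exact (Real.contDiff_exp.of_le le_top).comp (contDiff_const.mul (contDiff_qf y))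

end SliceExp

/-! ### The Gaussian barrier -/

/-- Barrier `Φ(x,t) = A exp(-β q(x) / (t - s + b))`. -/
def PhiB {n : ℕ} (y : E n) (s β b A : ℝ) : E n × ℝ → ℝ :=
  fun X => A * Real.exp ((-β/(X.2 - s + b)) * qf y X.1)

/-- Auxiliary function `G(x,t) = q(x) + C (t - t₁) + 1`. -/
def GB {n : ℕ} (y : E n) (t₁ C : ℝ) : E n × ℝ → ℝ :=
  fun X => qf y X.1 + (C * (X.2 - t₁) + 1)

section BarrierFacts
variable {n : ℕ} (y : E n) (s β b A : ℝ)

lemma PhiB_pos (hA : 0 < A) (X : E n × ℝ) : 0 < PhiB y s β b A X :=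
  mul_pos hA (Real.exp_pos _)

lemma D2_PhiB (X : E n × ℝ) (i j : Fin n) :
    D2 (PhiB y s β b A) X i j
      = PhiB y s β b A X * ((-β/(X.2 - s + b)) * (2 * (if j = i then 1 else 0)))
        + PhiB y s β b A X * ((-β/(X.2 - s + b))^2 * 4
            * (X.1 i - y i) * (X.1 j - y j)) := by
  set c := -β/(X.2 - s + b) with hc
  have hslice : (fun x => PhiB y s β b A (x, X.2)) = fun x => A * Real.exp (c * qf y x) := rfl
  rw [D2, hslice]
  have h1 : (fun x => fderiv ℝ (fun x' => A * Real.exp (c * qf y x')) x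
      (EuclideanSpace.single j 1))
      = fun x => A * Real.exp (c * qf y x) * (c * (2*(x j - y j))) := by
    funext x
    exact fderiv_sliceExp_single y A c x j
  rw [h1, (hasFDerivAt_dirExp y A c X.1 j).fderiv]
  simp only [ContinuousLinearMap.add_apply, ContinuousLinearMap.smul_apply, Lq_single,
    smul_eq_mul]
  have hproj : (EuclideanSpace.proj j : E n →L[ℝ] ℝ) (EuclideanSpace.single i 1)
      = if j = i then 1 else 0 := by
    have : (EuclideanSpace.proj j : E n →L[ℝ] ℝ) (EuclideanSpace.single i 1)
        = (EuclideanSpace.single i (1:ℝ)) j := rfl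
    rw [this, EuclideanSpace.single_apply]
  rw [hproj]
  show A * Real.exp (c * qf y X.1) * (c * (2 * (if j = i then 1 else 0)))
      + c * (2 * (X.1 j - y j)) * (A * Real.exp (c * qf y X.1) * c * (2 * (X.1 i - y i)))
      = _
  show _ = A * Real.exp (c * qf y X.1) * (c * (2 * (if j = i then 1 else 0)))
      + A * Real.exp (c * qf y X.1) * (c^2 * 4 * (X.1 i - y i) * (X.1 j - y j))
  ring

lemma Dt_PhiB (X : E n × ℝ) (hσ : X.2 - s + b ≠ 0) :
    Dt (PhiB y s β b A) X
      = PhiB y s β b A X * (β * qf y X.1 / (X.2 - s + b)^2) := by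
  set q := qf y X.1 with hq
  have hfun : (fun t => PhiB y s β b A (X.1, t))
      = fun t => A * Real.exp ((-β * (t - s + b)⁻¹) * q) := by
    funext t
    simp [PhiB, div_eq_mul_inv, hq]
  have hinner : HasDerivAt (fun t => t - s + b) 1 X.2 := by
    simpa using ((hasDerivAt_id X.2).sub_const s).add_const b
  have hinv := hinner.inv hσ
  have h2 := ((hinv.const_mul (-β)).mul_const q).exp.const_mul A
  rw [Dt, hfun, (show HasDerivAt (fun t => A * Real.exp ((-β * (t - s + b)⁻¹) * q)) _ X.2 from h2).deriv]
  show A * (Real.exp (-β * (X.2 - s + b)⁻¹ * q) * (-β * (-1 / (X.2 - s + b) ^ 2) * q)) = _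
  rw [PhiB]
  show _ = A * Real.exp (-β / (X.2 - s + b) * q) * (β * q / (X.2 - s + b) ^ 2)
  rw [div_eq_mul_inv (-β)]
  ring

lemma contDiffAt_PhiB_slice (X : E n × ℝ) :
    ContDiffAt ℝ 2 (fun x => PhiB y s β b A (x, X.2)) X.1 := by
  have h := (contDiff_sliceExp y A (-β/(X.2 - s + b))).contDiffAt (x := X.1)
  exact h

lemma differentiableAt_PhiB_time (X : E n × ℝ) (hσ : X.2 - s + b ≠ 0) :
    DifferentiableAt ℝ (fun t => PhiB y s β b A (X.1, t)) X.2 := by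
  set q := qf y X.1 with hq
  have hfun : (fun t => PhiB y s β b A (X.1, t))
      = fun t => A * Real.exp ((-β * (t - s + b)⁻¹) * q) := by
    funext t
    simp [PhiB, div_eq_mul_inv, hq]
  have hinner : HasDerivAt (fun t => t - s + b) 1 X.2 := by
    simpa using ((hasDerivAt_id X.2).sub_const s).add_const b
  have h2 := (((hinner.inv hσ).const_mul (-β)).mul_const q).exp.const_mul A
  rw [hfun]
  exact h2.differentiableAt

lemma continuousOn_PhiB :
    ContinuousOn (PhiB y s β b A) {X : E n × ℝ | X.2 - s + b ≠ 0} := by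
  have hq : Continuous (fun X : E n × ℝ => qf y X.1) :=
    (contDiff_qf y).continuous.comp continuous_fst
  have hden : Continuous (fun X : E n × ℝ => X.2 - s + b) :=
    (continuous_snd.sub continuous_const).add continuous_const
  have h1 : ContinuousOn (fun X : E n × ℝ => (-β/(X.2 - s + b)) * qf y X.1)
      {X : E n × ℝ | X.2 - s + b ≠ 0} := by
    apply ContinuousOn.mul
    · exact ContinuousOn.div continuousOn_const hden.continuousOn (fun X hX => hX)
    · exact hq.continuousOn
  exact continuousOn_const.mul (Real.continuous_exp.comp_continuousOn h1)
end BarrierFacts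

section GFacts
variable {n : ℕ} (y : E n) (t₁ C : ℝ)

lemma GB_continuous : Continuous (GB y t₁ C) := by
  apply Continuous.add
  · exact (contDiff_qf y).continuous.comp continuous_fst
  · exact ((continuous_const.mul (continuous_snd.sub continuous_const)).add continuous_const)

lemma D2_GB (X : E n × ℝ) (i j : Fin n) :
    D2 (GB y t₁ C) X i j = 2 * (if j = i then 1 else 0) := by
  rw [D2]
  have h1 : (fun x => fderiv ℝ (fun x' => GB y t₁ C (x', X.2)) x (EuclideanSpace.single j 1))
      = fun x => 2*(x j - y j) := by
    funext x
    have hs : (fun x' => GB y t₁ C (x', X.2)) = fun x' => qf y x' + (C * (X.2 - t₁) + 1) := rfl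
    rw [hs, ((hasFDerivAt_qf y x).add_const _).fderiv, Lq_single]
  rw [h1]
  have h2 : HasFDerivAt (fun x : E n => 2*(x j - y j))
      ((2:ℝ) • (EuclideanSpace.proj j : E n →L[ℝ] ℝ)) X.1 :=
    ((EuclideanSpace.proj j : E n →L[ℝ] ℝ).hasFDerivAt.sub_const (y j)).const_mul 2
  rw [h2.fderiv]
  simp only [ContinuousLinearMap.smul_apply, smul_eq_mul]
  have hproj : (EuclideanSpace.proj j : E n →L[ℝ] ℝ) (EuclideanSpace.single i 1)
      = if j = i then 1 else 0 := by
    have : (EuclideanSpace.proj j : E n →L[ℝ] ℝ) (EuclideanSpace.single i 1)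
        = (EuclideanSpace.single i (1:ℝ)) j := rfl
    rw [this, EuclideanSpace.single_apply]
  rw [hproj]

lemma Dt_GB (X : E n × ℝ) : Dt (GB y t₁ C) X = C := by
  rw [Dt]
  have : (fun t => GB y t₁ C (X.1, t)) = fun t => qf y X.1 + (C * (t - t₁) + 1) := rfl
  rw [this]
  have h : HasDerivAt (fun t => qf y X.1 + (C * (t - t₁) + 1)) C X.2 := by
    have := (((hasDerivAt_id X.2).sub_const t₁).const_mul C).add_const 1
    simpa using this.const_add (qf y X.1)
  exact h.deriv

lemma contDiffAt_GB_slice (X : E n × ℝ) :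
    ContDiffAt ℝ 2 (fun x => GB y t₁ C (x, X.2)) X.1 := by
  have : (fun x => GB y t₁ C (x, X.2)) = fun x => qf y x + (C * (X.2 - t₁) + 1) := rfl
  rw [this]
  exact ((contDiff_qf y).add contDiff_const).contDiffAt

lemma differentiableAt_GB_time (X : E n × ℝ) :
    DifferentiableAt ℝ (fun t => GB y t₁ C (X.1, t)) X.2 := by
  have : (fun t => GB y t₁ C (X.1, t)) = fun t => qf y X.1 + (C * (t - t₁) + 1) := rfl
  rw [this]
  have h : HasDerivAt (fun t => qf y X.1 + (C * (t - t₁) + 1)) C X.2 := by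
    have := (((hasDerivAt_id X.2).sub_const t₁).const_mul C).add_const 1
    simpa using this.const_add (qf y X.1)
  exact h.differentiableAt

lemma GB_nonneg (X : E n × ℝ) (hC : 0 ≤ C) (ht : t₁ ≤ X.2) : 0 ≤ GB y t₁ C X := by
  have h1 := qf_nonneg y X.1
  have h2 : 0 ≤ C * (X.2 - t₁) := mul_nonneg hC (by linarith)
  simp only [GB]
  linarith
end GFacts

/-! ### pointwise coefficient bounds -/

lemma diag_lower {n : ℕ} (a : Fin n → Fin n → ℝ) {ν : ℝ}
    (hell : ∀ ξ : Fin n → ℝ, ν * ∑ i, ξ i ^ 2 ≤ ∑ i, ∑ j, a i j * ξ i * ξ j)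
    (k : Fin n) : ν ≤ a k k := by
  classical
  have h := hell (fun i => if i = k then 1 else 0)
  have h1 : (∑ i, (if i = k then (1:ℝ) else 0) ^ 2) = 1 := by
    simp [ite_pow]
  have h2 : (∑ i, ∑ j, a i j * (if i = k then (1:ℝ) else 0) * (if j = k then 1 else 0)) = a k k := by
    rw [Finset.sum_eq_single k]
    · rw [Finset.sum_eq_single k] <;> simp +contextual
    · intro i _ hik
      apply Finset.sum_eq_zero
      intro j _
      simp [hik]
    · simp
  rw [h1, h2] at h
  simpa using h

lemma trace_bounds {n : ℕ} (a : Fin n → Fin n → ℝ) {ν : ℝ} (hν : 0 < ν)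
    (hell : ∀ ξ : Fin n → ℝ, ν * ∑ i, ξ i ^ 2 ≤ ∑ i, ∑ j, a i j * ξ i * ξ j)
    (hbnd : ∀ i j, |a i j| ≤ ν⁻¹) :
    0 ≤ ∑ i, a i i ∧ (∑ i, a i i) ≤ n * ν⁻¹ := by
  constructor
  · apply Finset.sum_nonneg
    intro i _
    exact le_trans (le_of_lt hν) (diag_lower a hell i)
  · calc (∑ i, a i i) ≤ ∑ i : Fin n, ν⁻¹ :=
        Finset.sum_le_sum fun i _ => le_trans (le_abs_self _) (hbnd i i)
    _ = n * ν⁻¹ := by simp [mul_comm]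

lemma quad_upper {n : ℕ} (a : Fin n → Fin n → ℝ) {ν : ℝ} (hν : 0 < ν)
    (hbnd : ∀ i j, |a i j| ≤ ν⁻¹) (z : Fin n → ℝ) :
    ∑ i, ∑ j, a i j * z i * z j ≤ (n * ν⁻¹) * ∑ i, z i ^ 2 := by
  have h1 : ∑ i, ∑ j, a i j * z i * z j ≤ ∑ i, ∑ j, ν⁻¹ * (|z i| * |z j|) := by
    apply Finset.sum_le_sum
    intro i _
    apply Finset.sum_le_sum
    intro j _
    calc a i j * z i * z j ≤ |a i j * z i * z j| := le_abs_self _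
    _ = |a i j| * (|z i| * |z j|) := by rw [abs_mul, abs_mul, mul_assoc]
    _ ≤ ν⁻¹ * (|z i| * |z j|) := by
        apply mul_le_mul_of_nonneg_right (hbnd i j)
        positivity
  have h2 : ∑ i, ∑ j, ν⁻¹ * (|z i| * |z j|) = ν⁻¹ * (∑ i, |z i|)^2 := by
    rw [sq, Finset.sum_mul_sum, Finset.mul_sum]
    refine Finset.sum_congr rfl fun i _ => ?_
    rw [Finset.mul_sum]
  have h3 : (∑ i, |z i|)^2 ≤ (n : ℝ) * ∑ i, z i ^ 2 := by
    have := Finset.sum_mul_sq_le_sq_mul_sq Finset.univ (fun _ => (1:ℝ)) (fun i => |z i|)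
    simp only [one_mul, one_pow] at this
    calc (∑ i, |z i|)^2 ≤ (∑ _i : Fin n, (1:ℝ)) * ∑ i, |z i|^2 := this
    _ = (n:ℝ) * ∑ i, z i^2 := by
        simp [sq_abs]
  calc ∑ i, ∑ j, a i j * z i * z j ≤ ν⁻¹ * (∑ i, |z i|)^2 := by rw [← h2]; exact h1
  _ ≤ ν⁻¹ * ((n:ℝ) * ∑ i, z i ^ 2) := by
      apply mul_le_mul_of_nonneg_left h3
      positivity
  _ = (n * ν⁻¹) * ∑ i, z i ^ 2 := by ring

/-! ### The barrier is a supersolution -/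

lemma LPhi_nonpos {n : ℕ} (y : E n) (s b A : ℝ) {ν β : ℝ} (hν : 0 < ν)
    (hβ0 : 0 ≤ β) (hβ : 4 * β * n * ν⁻¹ ≤ 1) (hA : 0 < A)
    (a : Fin n → Fin n → ℝ)
    (hell : ∀ ξ : Fin n → ℝ, ν * ∑ i, ξ i ^ 2 ≤ ∑ i, ∑ j, a i j * ξ i * ξ j)
    (hbnd : ∀ i j, |a i j| ≤ ν⁻¹)
    (X : E n × ℝ) (hσ : 0 < X.2 - s + b) :
    (∑ i, ∑ j, a i j * D2 (PhiB y s β b A) X i j) - Dt (PhiB y s β b A) X ≤ 0 := by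
  set σ := X.2 - s + b with hσdef
  set P := PhiB y s β b A X with hP
  have hPpos : 0 < P := PhiB_pos y s β b A hA X
  have hq : qf y X.1 = ∑ i, (X.1 i - y i) ^ 2 := rfl
  -- split the sum
  have hterm : ∀ i j, a i j * D2 (PhiB y s β b A) X i j
      = (if j = i then P * ((-β/σ) * 2) * a i j else 0)
        + P * ((-β/σ)^2 * 4) * (a i j * (X.1 i - y i) * (X.1 j - y j)) := by
    intro i j
    rw [D2_PhiB]
    simp only [← hσdef, ← hP]
    by_cases h : j = i
    · subst h
      simp only [if_pos]
      ring
    · simp only [h, if_false]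
      ring
  have h1 : ∀ i, ∑ j, a i j * D2 (PhiB y s β b A) X i j
      = P * ((-β/σ) * 2) * a i i + P * ((-β/σ)^2 * 4) * (∑ j, a i j * (X.1 i - y i) * (X.1 j - y j)) := by
    intro i
    calc ∑ j, a i j * D2 (PhiB y s β b A) X i j
        = ∑ j, ((if j = i then P * ((-β/σ) * 2) * a i j else 0)
          + P * ((-β/σ)^2 * 4) * (a i j * (X.1 i - y i) * (X.1 j - y j))) :=
          Finset.sum_congr rfl fun j _ => hterm i j
      _ = (∑ j, if j = i then P * ((-β/σ) * 2) * a i j else 0)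
          + ∑ j, P * ((-β/σ)^2 * 4) * (a i j * (X.1 i - y i) * (X.1 j - y j)) := Finset.sum_add_distrib
      _ = P * ((-β/σ) * 2) * a i i + P * ((-β/σ)^2 * 4) * ∑ j, (a i j * (X.1 i - y i) * (X.1 j - y j)) := by
          rw [Finset.sum_ite_eq' Finset.univ i, ← Finset.mul_sum]
          simp
  have hsplit : ∑ i, ∑ j, a i j * D2 (PhiB y s β b A) X i j
      = P * ((-β/σ) * 2) * (∑ i, a i i)
        + P * ((-β/σ)^2 * 4) * (∑ i, ∑ j, a i j * (X.1 i - y i) * (X.1 j - y j)) := by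
    calc ∑ i, ∑ j, a i j * D2 (PhiB y s β b A) X i j
        = ∑ i, (P * ((-β/σ) * 2) * a i i
          + P * ((-β/σ)^2 * 4) * (∑ j, a i j * (X.1 i - y i) * (X.1 j - y j))) :=
          Finset.sum_congr rfl fun i _ => h1 i
      _ = _ := by rw [Finset.sum_add_distrib, ← Finset.mul_sum, ← Finset.mul_sum]
  have htr := trace_bounds a hν hell hbnd
  have hquad := quad_upper a hν hbnd (fun i => X.1 i - y i)
  simp only at hquad
  have hDt := Dt_PhiB y s β b A X (ne_of_gt hσ)
  rw [hsplit, hDt, ← hσdef, ← hP, hq]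
  have hqnn : 0 ≤ ∑ i, (X.1 i - y i) ^ 2 := Finset.sum_nonneg fun i _ => sq_nonneg _
  have h1 : P * ((-β/σ) * 2) * (∑ i, a i i) ≤ 0 := by
    apply mul_nonpos_of_nonpos_of_nonneg _ htr.1
    have : (-β/σ) ≤ 0 := div_nonpos_of_nonpos_of_nonneg (by linarith) (le_of_lt hσ)
    nlinarith
  have h2 : P * ((-β/σ)^2 * 4) * (∑ i, ∑ j, a i j * (X.1 i - y i) * (X.1 j - y j))
      ≤ P * (β * (∑ i, (X.1 i - y i) ^ 2) / σ^2) := by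
    have hc : (-β/σ)^2 = β^2/σ^2 := by rw [div_pow]; ring_nf
    rw [hc]
    have hstep : P * (β^2/σ^2 * 4) * (∑ i, ∑ j, a i j * (X.1 i - y i) * (X.1 j - y j))
        ≤ P * (β^2/σ^2 * 4) * ((n * ν⁻¹) * ∑ i, (X.1 i - y i) ^ 2) := by
      apply mul_le_mul_of_nonneg_left hquad
      positivity
    refine le_trans hstep ?_
    have hσne : σ ≠ 0 := ne_of_gt hσ
    have key : β^2 * 4 * ((n:ℝ) * ν⁻¹) ≤ β := by
      have h4 : β^2 * 4 * ((n:ℝ) * ν⁻¹) = β * (4 * β * n * ν⁻¹) := by ring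
      rw [h4]
      calc β * (4 * β * (n:ℝ) * ν⁻¹) ≤ β * 1 := mul_le_mul_of_nonneg_left hβ hβ0
      _ = β := mul_one β
    have hfac : 0 ≤ P * (∑ i, (X.1 i - y i)^2) / σ^2 := by positivity
    have lhs_eq : P * (β^2/σ^2*4) * (((n:ℝ)*ν⁻¹) * ∑ i, (X.1 i - y i)^2)
        = (P * (∑ i, (X.1 i - y i)^2) / σ^2) * (β^2*4*((n:ℝ)*ν⁻¹)) := by
      field_simp
    have rhs_eq : P * (β * (∑ i, (X.1 i - y i)^2) / σ^2) = (P * (∑ i, (X.1 i - y i)^2) / σ^2) * β := by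
      field_simp
    rw [lhs_eq, rhs_eq]
    exact mul_le_mul_of_nonneg_left key hfac
  linarith

/-! ### L of the auxiliary function `G` -/

lemma LG_le {n : ℕ} (y : E n) (t₁ : ℝ) {ν : ℝ} (hν : 0 < ν)
    (a : Fin n → Fin n → ℝ)
    (hbnd : ∀ i j, |a i j| ≤ ν⁻¹)
    (X : E n × ℝ) :
    (∑ i, ∑ j, a i j * D2 (GB y t₁ (2*n*ν⁻¹+1)) X i j)
      - Dt (GB y t₁ (2*n*ν⁻¹+1)) X ≤ -1 := by
  have h1 : ∑ i, ∑ j, a i j * D2 (GB y t₁ (2*n*ν⁻¹+1)) X i j = 2 * ∑ i, a i i := by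
    rw [Finset.mul_sum]
    refine Finset.sum_congr rfl fun i _ => ?_
    rw [Finset.sum_eq_single i]
    · rw [D2_GB]; simp; ring
    · intro j _ hji; rw [D2_GB]; simp [hji]
    · simp
  have h2 : ∑ i, a i i ≤ n * ν⁻¹ := by
    calc (∑ i, a i i) ≤ ∑ i : Fin n, ν⁻¹ :=
        Finset.sum_le_sum fun i _ => le_trans (le_abs_self _) (hbnd i i)
    _ = n * ν⁻¹ := by simp [mul_comm]
  rw [h1, Dt_GB]
  linarith

/-- directional derivative function of a C² function is differentiable. -/
lemma dirfun_hasFDerivAt {n : ℕ} {f : E n → ℝ} {x₀ : E n}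
    (h : ContDiffAt ℝ 2 f x₀) (w : E n) :
    HasFDerivAt (fun x => fderiv ℝ f x w)
      ((fderiv ℝ (fderiv ℝ f) x₀).flip w) x₀ := by
  have hd2 : ContDiffAt ℝ 1 (fderiv ℝ f) x₀ := h.fderiv_right (by norm_num)
  have hdiff2 : DifferentiableAt ℝ (fderiv ℝ f) x₀ := hd2.differentiableAt one_ne_zero
  have h1 := hdiff2.hasFDerivAt.clm_apply (hasFDerivAt_const w x₀)
  simpa using h1

lemma D2_add {n : ℕ} (u₁ u₂ : E n × ℝ → ℝ) (X : E n × ℝ)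
    (h₁ : ContDiffAt ℝ 2 (fun x => u₁ (x, X.2)) X.1)
    (h₂ : ContDiffAt ℝ 2 (fun x => u₂ (x, X.2)) X.1) (i j : Fin n) :
    D2 (fun Z => u₁ Z + u₂ Z) X i j = D2 u₁ X i j + D2 u₂ X i j := by
  set f := fun x => u₁ (x, X.2) with hf
  set g := fun x => u₂ (x, X.2) with hg
  set w := EuclideanSpace.single (𝕜 := ℝ) j (1:ℝ) with hw
  have hev : (fun x => fderiv ℝ (fun x' => u₁ (x', X.2) + u₂ (x', X.2)) x w)
      =ᶠ[nhds X.1] (fun x => fderiv ℝ f x w + fderiv ℝ g x w) := by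
    filter_upwards [h₁.eventually (by simp), h₂.eventually (by simp)] with x hx1 hx2
    have hd1 : DifferentiableAt ℝ f x := hx1.differentiableAt (by norm_num)
    have hd2 : DifferentiableAt ℝ g x := hx2.differentiableAt (by norm_num)
    have : fderiv ℝ (fun x' => f x' + g x') x = fderiv ℝ f x + fderiv ℝ g x :=
      fderiv_add hd1 hd2
    rw [show (fun x' => u₁ (x', X.2) + u₂ (x', X.2)) = fun x' => f x' + g x' from rfl, this]
    simp
  have hD1 := dirfun_hasFDerivAt h₁ w
  have hD2 := dirfun_hasFDerivAt h₂ w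
  have hsum := hD1.add hD2
  have hfe : fderiv ℝ (fun x => fderiv ℝ (fun x' => u₁ (x', X.2) + u₂ (x', X.2)) x w) X.1
      = fderiv ℝ (fun x => fderiv ℝ f x w + fderiv ℝ g x w) X.1 := hev.fderiv_eq
  have e0 : D2 (fun Z => u₁ Z + u₂ Z) X i j
      = (fderiv ℝ (fun x => fderiv ℝ (fun x' => u₁ (x', X.2) + u₂ (x', X.2)) x w) X.1)
        (EuclideanSpace.single i 1) := rfl
  have e1 : D2 u₁ X i j
      = ((fderiv ℝ (fderiv ℝ f) X.1).flip w) (EuclideanSpace.single i 1) := by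
    have e : D2 u₁ X i j
        = (fderiv ℝ (fun x => fderiv ℝ f x w) X.1) (EuclideanSpace.single i 1) := rfl
    rw [e, hD1.fderiv]
  have e2 : D2 u₂ X i j
      = ((fderiv ℝ (fderiv ℝ g) X.1).flip w) (EuclideanSpace.single i 1) := by
    have e : D2 u₂ X i j
        = (fderiv ℝ (fun x => fderiv ℝ g x w) X.1) (EuclideanSpace.single i 1) := rfl
    rw [e, hD2.fderiv]
  rw [e0, hfe, (show HasFDerivAt (fun x => fderiv ℝ f x w + fderiv ℝ g x w) _ X.1 from hsum).fderiv, ContinuousLinearMap.add_apply, e1, e2]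

lemma D2_const_mul {n : ℕ} (u : E n × ℝ → ℝ) (c : ℝ) (X : E n × ℝ)
    (h : ContDiffAt ℝ 2 (fun x => u (x, X.2)) X.1) (i j : Fin n) :
    D2 (fun Z => c * u Z) X i j = c * D2 u X i j := by
  set f := fun x => u (x, X.2) with hf
  set w := EuclideanSpace.single (𝕜 := ℝ) j (1:ℝ) with hw
  have hev : (fun x => fderiv ℝ (fun x' => c * u (x', X.2)) x w)
      =ᶠ[nhds X.1] (fun x => c * fderiv ℝ f x w) := by
    filter_upwards [h.eventually (by simp)] with x hx
    have hd : DifferentiableAt ℝ f x := hx.differentiableAt (by norm_num)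
    have : fderiv ℝ (fun x' => c * f x') x = c • fderiv ℝ f x := fderiv_const_mul hd c
    rw [show (fun x' => c * u (x', X.2)) = fun x' => c * f x' from rfl, this]
    simp
  have hD := (dirfun_hasFDerivAt h w).const_mul c
  have e0 : D2 (fun Z => c * u Z) X i j
      = (fderiv ℝ (fun x => fderiv ℝ (fun x' => c * u (x', X.2)) x w) X.1)
        (EuclideanSpace.single i 1) := rfl
  have e1 : D2 u X i j
      = ((fderiv ℝ (fderiv ℝ f) X.1).flip w) (EuclideanSpace.single i 1) := by
    have e : D2 u X i j
        = (fderiv ℝ (fun x => fderiv ℝ f x w) X.1) (EuclideanSpace.single i 1) := rfl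
    rw [e, (dirfun_hasFDerivAt h w).fderiv]
  rw [e0, hev.fderiv_eq, hD.fderiv, ContinuousLinearMap.smul_apply, e1]
  simp

lemma Dt_add {n : ℕ} (u₁ u₂ : E n × ℝ → ℝ) (X : E n × ℝ)
    (h₁ : DifferentiableAt ℝ (fun t => u₁ (X.1, t)) X.2)
    (h₂ : DifferentiableAt ℝ (fun t => u₂ (X.1, t)) X.2) :
    Dt (fun Z => u₁ Z + u₂ Z) X = Dt u₁ X + Dt u₂ X := by
  unfold Dt
  exact deriv_add h₁ h₂

lemma Dt_const_mul {n : ℕ} (u : E n × ℝ → ℝ) (c : ℝ) (X : E n × ℝ) :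
    Dt (fun Z => c * u Z) X = c * Dt u X := by
  unfold Dt
  exact deriv_const_mul_field c

lemma closure_cyl {n : ℕ} (Ω : Set (E n)) : closure (Cyl Ω) = closure Ω ×ˢ Ici 0 := by
  rw [Cyl, CylFrom, closure_prod_eq, closure_Ioi]

lemma LVal_neg {n : ℕ} (a : E n × ℝ → Fin n → Fin n → ℝ) (u : E n × ℝ → ℝ) (X : E n × ℝ)
    (h : ContDiffAt ℝ 2 (fun x => u (x, X.2)) X.1) :
    LVal a (fun Z => (-1 : ℝ) * u Z) X = - LVal a u X := by
  unfold LVal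
  have hD2 : ∀ i j, D2 (fun Z => (-1:ℝ) * u Z) X i j = (-1) * D2 u X i j :=
    fun i j => D2_const_mul u (-1) X h i j
  have hDt := Dt_const_mul u (-1) X
  rw [hDt]
  have hsum : ∑ i, ∑ j, a X i j * D2 (fun Z => (-1:ℝ) * u Z) X i j
      = - ∑ i, ∑ j, a X i j * D2 u X i j := by
    rw [← Finset.sum_neg_distrib]
    refine Finset.sum_congr rfl fun i _ => ?_
    rw [← Finset.sum_neg_distrib]
    refine Finset.sum_congr rfl fun j _ => ?_
    rw [hD2]
    ring
  rw [hsum]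
  ring

lemma vanish_aux {n : ℕ} {ν : ℝ} (hν : 0 < ν) {Ω : Set (E n)} (hΩo : IsOpen Ω)
    {a : E n × ℝ → Fin n → Fin n → ℝ}
    (ha : IsParabolicCoeff ν a (closure (Cyl Ω)))
    {w : E n × ℝ → ℝ} {M : ℝ}
    (hsol : SolvesL a w (Cyl Ω))
    (hc : ContinuousOn w (closure (Cyl Ω)))
    (hM : ∀ X ∈ closure (Cyl Ω), |w X| ≤ M)
    {T₀ : ℝ} (hT₀ : 0 < T₀)
    (hzb : ∀ Z ∈ pB Ω, Z.2 ≤ T₀ → w Z = 0)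
    (y : E n) :
    ∀ x ∈ Ω, ∀ t : ℝ, 0 < t → t ≤ T₀ → ∀ ε : ℝ, 0 < ε →
      0 ≤ ε * GB y 0 (2*n*ν⁻¹+1) (x, t) + w (x, t) := by
  intro x hx t ht0 htT ε hε
  set C : ℝ := 2*n*ν⁻¹+1 with hC
  have hC0 : 0 ≤ C := by positivity
  set L : ℝ := dist x y + 1 + Real.sqrt (max M 0 / ε) with hL
  have hs0 : 0 ≤ Real.sqrt (max M 0 / ε) := Real.sqrt_nonneg _
  have hL1 : dist x y < L := by
    have := dist_nonneg (x := x) (y := y)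
    simp only [hL]; linarith
  have hL0 : 0 < L := by
    have := dist_nonneg (x := x) (y := y)
    simp only [hL]; linarith
  have hLsq : max M 0 ≤ ε * L^2 := by
    have h1 : Real.sqrt (max M 0 / ε) ≤ L := by
      have := dist_nonneg (x := x) (y := y)
      simp only [hL]; linarith
    have h2 : (Real.sqrt (max M 0 / ε))^2 ≤ L^2 := by
      apply pow_le_pow_left₀ hs0 h1
    rw [Real.sq_sqrt (by positivity)] at h2
    calc max M 0 = ε * (max M 0 / ε) := by field_simp
    _ ≤ ε * L^2 := by
        apply mul_le_mul_of_nonneg_left h2 (le_of_lt hε)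
  set W : Set (E n) := Ω ∩ ball y L with hW
  set v : E n × ℝ → ℝ := fun Z => ε * GB y 0 C Z + w Z with hv
  have hWsub : W ×ˢ Ioc 0 T₀ ⊆ Cyl Ω := by
    rintro Z ⟨⟨hz1, _⟩, hz2⟩
    exact ⟨hz1, hz2.1⟩
  have hclos : closure W ×ˢ Icc 0 T₀ ⊆ closure (Cyl Ω) := by
    rw [closure_cyl]
    rintro Z ⟨hz1, hz2⟩
    have : closure W ⊆ closure Ω := closure_mono inter_subset_left
    exact ⟨this hz1, hz2.1⟩
  have key := min_principle a W (hΩo.inter isOpen_ball)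
    (Metric.isBounded_ball.subset inter_subset_right) hT₀ v
    (?_ : ContinuousOn v (closure W ×ˢ Icc 0 T₀)) ?_ ?_ ?_ ?_ ?_
  · have hxW : x ∈ closure W := subset_closure ⟨hx, mem_ball.2 hL1⟩
    exact key (x, t) hxW ⟨le_of_lt ht0, htT⟩
  -- continuity
  · apply ContinuousOn.add
    · exact (continuous_const.mul (GB_continuous y 0 C)).continuousOn
    · exact hc.mono hclos
  -- ellipticity
  · intro X hX ξ
    have h1 := (ha.2 X (subset_closure (hWsub hX))).1 ξ
    have h2 : 0 ≤ ν * ∑ i, ξ i ^ 2 :=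
      mul_nonneg (le_of_lt hν) (Finset.sum_nonneg fun i _ => sq_nonneg _)
    linarith
  -- smoothness
  · intro X hX
    have hu := hsol.1 X (hWsub hX)
    constructor
    · exact (contDiffAt_const.mul (contDiffAt_GB_slice y 0 C X)).add hu.1
    · exact ((differentiableAt_GB_time y 0 C X).const_mul ε).add hu.2
  -- strict supersolution
  · intro X hX
    have hu := hsol.1 X (hWsub hX)
    have hD2v : ∀ i j, D2 v X i j = ε * D2 (GB y 0 C) X i j + D2 w X i j := by
      intro i j
      have h1 := D2_add (fun Z => ε * GB y 0 C Z) w X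
        (contDiffAt_const.mul (contDiffAt_GB_slice y 0 C X)) hu.1 i j
      have h2 := D2_const_mul (GB y 0 C) ε X (contDiffAt_GB_slice y 0 C X) i j
      rw [h1, h2]
    have hDtv : Dt v X = ε * Dt (GB y 0 C) X + Dt w X := by
      have h1 := Dt_add (fun Z => ε * GB y 0 C Z) w X
        ((differentiableAt_GB_time y 0 C X).const_mul ε) hu.2
      have h2 := Dt_const_mul (GB y 0 C) ε X
      rw [h1, h2]
    have hsumv : ∑ i, ∑ j, a X i j * D2 v X i j
        = ε * (∑ i, ∑ j, a X i j * D2 (GB y 0 C) X i j)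
          + ∑ i, ∑ j, a X i j * D2 w X i j := by
      rw [Finset.mul_sum, ← Finset.sum_add_distrib]
      refine Finset.sum_congr rfl fun i _ => ?_
      rw [Finset.mul_sum, ← Finset.sum_add_distrib]
      refine Finset.sum_congr rfl fun j _ => ?_
      rw [hD2v]
      ring
    have hLG := LG_le y 0 hν (a X) (fun i j => (ha.2 X (subset_closure (hWsub hX))).2 i j) X
    have hLu : (∑ i, ∑ j, a X i j * D2 w X i j) - Dt w X = 0 := hsol.2 X (hWsub hX)
    rw [hsumv, hDtv]
    rw [← hC] at hLG
    nlinarith [hLG, hLu]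
  -- lateral boundary
  · intro X hX1 hX2
    have hfr := frontier_inter_subset Ω (ball y L) hX1
    have hvge : w X = 0 → 0 ≤ v X := by
      intro hw0
      simp only [hv, hw0, add_zero]
      exact mul_nonneg (le_of_lt hε) (GB_nonneg y 0 C X hC0 hX2.1)
    rcases hfr with ⟨hzf, _⟩ | ⟨hzc, hzb'⟩
    · -- on the lateral boundary of Ω
      rcases eq_or_lt_of_le hX2.1 with h0 | h0
      · apply hvge
        apply hzb X _ hX2.2
        exact Or.inr ⟨frontier_subset_closure hzf, by simp [← h0]⟩
      · apply hvge
        apply hzb X _ hX2.2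
        exact Or.inl ⟨hzf, h0⟩
    · -- on the sphere
      have hdist : dist X.1 y = L := by
        have hfe : frontier (ball y L) = closure (ball y L) \ ball y L :=
          isOpen_ball.frontier_eq
        rw [hfe] at hzb'
        have := Metric.closure_ball_subset_closedBall hzb'.1
        exact le_antisymm (mem_closedBall.1 this)
          (not_lt.1 fun hlt => hzb'.2 (mem_ball.2 hlt))
      have hXQ : X ∈ closure (Cyl Ω) := by
        rw [closure_cyl]
        exact ⟨hzc, hX2.1⟩
      have hwM := hM X hXQ
      have hG : L^2 ≤ GB y 0 C X := by
        have h1 : qf y X.1 = ‖X.1 - y‖^2 := qf_eq_norm y X.1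
        have h2 : ‖X.1 - y‖ = dist X.1 y := (dist_eq_norm X.1 y).symm
        have h3 : 0 ≤ C * (X.2 - 0) := mul_nonneg hC0 (by simpa using hX2.1)
        simp only [GB]
        rw [h1, h2, hdist]
        linarith
    -- combine
      have : max M 0 ≤ ε * GB y 0 C X :=
        le_trans hLsq (mul_le_mul_of_nonneg_left hG (le_of_lt hε))
      have habs : -w X ≤ M := by
        have := abs_le.1 hwM
        linarith [this.1]
      simp only [hv]
      have hM0 : M ≤ max M 0 := le_max_left _ _
      linarith
  -- bottom
  · intro X hX1 hX2
    have hw0 : w X = 0 := by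
      apply hzb X _ (by rw [hX2]; exact le_of_lt hT₀)
      refine Or.inr ⟨?_, by simp [hX2]⟩
      exact (closure_mono inter_subset_left) hX1
    simp only [hv, hw0, add_zero]
    exact mul_nonneg (le_of_lt hε) (GB_nonneg y 0 C X hC0 (by rw [hX2]))

lemma earlyVanish {n : ℕ} {ν : ℝ} (hν : 0 < ν) {Ω : Set (E n)} (hΩo : IsOpen Ω)
    {a : E n × ℝ → Fin n → Fin n → ℝ}
    (ha : IsParabolicCoeff ν a (closure (Cyl Ω)))
    {Y : E n × ℝ} {ρ₀ : ℝ} (hρ₀ : 0 < ρ₀)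
    {u : E n × ℝ → ℝ} {M : ℝ}
    (hsol : SolvesL a u (Cyl Ω))
    (hc : ContinuousOn u (closure (Cyl Ω)))
    (hM : ∀ X ∈ closure (Cyl Ω), |u X| ≤ M)
    (hz : ∀ Z ∈ pB Ω \ Cr Y (ρ₀/2), u Z = 0) :
    ∀ x ∈ closure Ω, ∀ t : ℝ, 0 < t → t ≤ Y.2 - ρ₀^2/4 → u (x, t) = 0 := by
  set T₀ : ℝ := Y.2 - ρ₀^2/4 with hT₀def
  set y : E n := Y.1 with hy
  -- boundary values vanish up to time T₀
  have hzb : ∀ Z ∈ pB Ω, Z.2 ≤ T₀ → u Z = 0 := by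
    intro Z hZ hZT
    apply hz
    refine ⟨hZ, ?_⟩
    rintro ⟨-, ht⟩
    have h1 : Y.2 - (ρ₀/2)^2 < Z.2 := ht.1
    have h2 : (ρ₀/2)^2 = ρ₀^2/4 := by ring
    simp only [hT₀def] at hZT
    linarith
  set w2 : E n × ℝ → ℝ := fun Z => (-1:ℝ) * u Z with hw2
  have hsol2 : SolvesL a w2 (Cyl Ω) := by
    constructor
    · intro X hX
      obtain ⟨h1, h2⟩ := hsol.1 X hX
      exact ⟨contDiffAt_const.mul h1, h2.const_mul (-1)⟩
    · intro X hX
      have := LVal_neg a u X (hsol.1 X hX).1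
      rw [hw2, this, hsol.2 X hX, neg_zero]
  have hc2 : ContinuousOn w2 (closure (Cyl Ω)) := continuousOn_const.mul hc
  have hM2 : ∀ X ∈ closure (Cyl Ω), |w2 X| ≤ M := by
    intro X hX
    simp only [hw2]
    rw [abs_mul]
    simpa using hM X hX
  have hzb2 : ∀ Z ∈ pB Ω, Z.2 ≤ T₀ → w2 Z = 0 := by
    intro Z h1 h2
    simp [hw2, hzb Z h1 h2]
  intro x hx t ht0 htT
  have hT0pos : 0 < T₀ := lt_of_lt_of_le ht0 htT
  have hint : ∀ x' ∈ Ω, u (x', t) = 0 := by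
    intro x' hx'
    have hA := vanish_aux hν hΩo ha hsol hc hM hT0pos hzb y x' hx' t ht0 htT
    have hB := vanish_aux hν hΩo ha hsol2 hc2 hM2 hT0pos hzb2 y x' hx' t ht0 htT
    by_contra hne
    set G0 := GB y 0 (2*n*ν⁻¹+1) (x', t) with hG0
    have hG0pos : 0 < G0 := by
      have h1 : 0 ≤ qf y x' := qf_nonneg y x'
      have h2 : 0 ≤ (2*(n:ℝ)*ν⁻¹+1) * (t - 0) := by
        apply mul_nonneg _ (by linarith)
        positivity
      simp only [hG0, GB]
      linarith
    set ε0 := |u (x', t)| / (2 * G0) with hε0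
    have hu0 : 0 < |u (x', t)| := abs_pos.2 hne
    have hε0pos : 0 < ε0 := by positivity
    have h1 := hA ε0 hε0pos
    have h2 := hB ε0 hε0pos
    simp only [hw2] at h2
    have hεG : ε0 * G0 = |u (x',t)| / 2 := by
      rw [hε0]
      field_simp

    have habs : |u (x',t)| ≤ ε0 * G0 := abs_le.2 ⟨by linarith, by linarith⟩
    rw [hεG] at habs
    linarith
  have hxt : (x, t) ∈ closure (Cyl Ω) := by
    rw [closure_cyl]
    exact ⟨hx, le_of_lt ht0⟩
  have hcwa : ContinuousWithinAt u (closure (Cyl Ω)) (x, t) := hc.continuousWithinAt hxt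
  have hψ : Tendsto (fun z : E n => (z, t)) (nhdsWithin x Ω)
      (nhdsWithin (x,t) (closure (Cyl Ω))) := by
    apply tendsto_nhdsWithin_of_tendsto_nhds_of_eventually_within
    · exact ((continuous_id.prodMk continuous_const).tendsto x).mono_left nhdsWithin_le_nhds
    · filter_upwards [self_mem_nhdsWithin] with z hz
      exact subset_closure (⟨hz, ht0⟩ : (z,t) ∈ Cyl Ω)
  have hten : Tendsto (fun z : E n => u (z, t)) (nhdsWithin x Ω) (nhds (u (x,t))) :=
    hcwa.tendsto.comp hψ
  have hzero : Tendsto (fun z : E n => u (z, t)) (nhdsWithin x Ω) (nhds 0) := by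
    apply Tendsto.congr' _ tendsto_const_nhds
    filter_upwards [self_mem_nhdsWithin] with z hz
    exact (hint z hz).symm
  haveI hne : (nhdsWithin x Ω).NeBot := mem_closure_iff_nhdsWithin_neBot.1 hx
  exact tendsto_nhds_unique hten hzero

set_option maxHeartbeats 2000000 in
lemma sphereBound {n : ℕ} {ν : ℝ} (hν : 0 < ν)
    {Ω : Set (E n)} (hΩo : IsOpen Ω)
    {a : E n × ℝ → Fin n → Fin n → ℝ}
    (ha : IsParabolicCoeff ν a (closure (Cyl Ω)))
    {Y : E n × ℝ} (hY2 : 0 ≤ Y.2)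
    {ρ₀ R K : ℝ} (hρ₀ : 0 < ρ₀) (hK : 8 ≤ K)
    {u : E n × ℝ → ℝ} {M : ℝ}
    (hsol : SolvesL a u (Cyl Ω)) (hc : ContinuousOn u (closure (Cyl Ω)))
    (hM : ∀ X ∈ closure (Cyl Ω), |u X| ≤ M)
    (hpos : ∀ X ∈ Cyl Ω, ‖X.1 - Y.1‖ ≤ K * Real.sqrt (X.2 - Y.2) →
          ρ₀ ≤ Real.sqrt (X.2 - Y.2) → Real.sqrt (X.2 - Y.2) ≤ R → 0 ≤ u X)
    (hz : ∀ Z ∈ pB Ω \ Cr Y (ρ₀/2), u Z = 0)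
    {rin rtar β0 A Θ : ℝ}
    (hrin : ρ₀ ≤ rin) (hrr : rin < rtar) (hrR : rtar ≤ R)
    (hβ0 : 0 ≤ β0) (hβν : 4 * β0 * n * ν⁻¹ ≤ 1) (hA : 0 < A) (hΘ : 0 ≤ Θ)
    (hΦinner : ∀ τ : ℝ, |τ| ≤ rin^2 →
        1 ≤ A * Real.exp ((-β0/(τ + 3*rin^2)) * (K*rin)^2))
    (hΦtar : ∀ τ : ℝ, -2*rin^2 ≤ τ → τ ≤ rtar^2 →
        A * Real.exp ((-β0/(τ + 3*rin^2)) * (K*rtar)^2) ≤ Θ) :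
    sSup ((fun X => max (-u X) 0) ''
        (Cyl Ω ∩ {X : E n × ℝ | ‖X.1 - Y.1‖ = K * rtar ∧ |X.2 - Y.2| < rtar ^ 2}))
      ≤ Θ * sSup ((fun X => max (-u X) 0) ''
        (Cyl Ω ∩ {X : E n × ℝ | ‖X.1 - Y.1‖ = K * rin ∧ |X.2 - Y.2| < rin ^ 2})) := by
  have hν1 := hν
  set y : E n := Y.1 with hy
  set s : ℝ := Y.2 with hs
  have hEV := earlyVanish hν hΩo ha hρ₀ hsol hc hM hz
  set C : ℝ := 2*n*ν⁻¹+1 with hC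
  have hC0 : 0 ≤ C := by positivity
  set b : ℝ := 3*rin^2 with hb
  set t₁ : ℝ := max 0 (s - 2*rin^2) with ht₁
  set t₂ : ℝ := s + rtar^2 with ht₂
  have hrin0 : 0 < rin := lt_of_lt_of_le hρ₀ hrin
  have hrtar0 : 0 < rtar := lt_trans hrin0 hrr
  have hK0 : 0 < K := lt_of_lt_of_le (by norm_num) hK
  have ht₁0 : 0 ≤ t₁ := le_max_left _ _
  have hlt : t₁ < t₂ := by
    apply max_lt
    · simp only [ht₂]; positivity
    · simp only [ht₂]; nlinarith
  have ht₁ge : s - 2*rin^2 ≤ t₁ := le_max_right _ _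
  -- σ is positive on the slab
  have hσpos : ∀ t : ℝ, t₁ ≤ t → rin^2 ≤ t - s + b := by
    intro t ht
    have := le_trans ht₁ge ht
    simp only [hb]
    linarith
  set Φ : E n × ℝ → ℝ := PhiB y s β0 b A with hΦ
  -- the inner sSup
  set F : ℝ := sSup ((fun X => max (-u X) 0) ''
      (Cyl Ω ∩ {X : E n × ℝ | ‖X.1 - Y.1‖ = K * rin ∧ |X.2 - Y.2| < rin ^ 2})) with hF
  have himg_nonneg : ∀ ρ : ℝ, ∀ v ∈ ((fun X => max (-u X) 0) ''
      (Cyl Ω ∩ {X : E n × ℝ | ‖X.1 - Y.1‖ = K * ρ ∧ |X.2 - Y.2| < ρ ^ 2})), 0 ≤ v := by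
    rintro ρ v ⟨X, -, rfl⟩
    exact le_max_right _ _
  have hF0 : 0 ≤ F := Real.sSup_nonneg (himg_nonneg rin)
  have hbdd : BddAbove ((fun X => max (-u X) 0) ''
      (Cyl Ω ∩ {X : E n × ℝ | ‖X.1 - Y.1‖ = K * rin ∧ |X.2 - Y.2| < rin ^ 2})) := by
    refine ⟨max M 0, ?_⟩
    rintro v ⟨X, ⟨hX1, -⟩, rfl⟩
    have hXQ : X ∈ closure (Cyl Ω) := subset_closure hX1
    have := hM X hXQ
    have h1 : -u X ≤ M := by
      have := abs_le.1 this
      linarith [this.1]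
    exact max_le_max h1 (le_refl 0)
  have hmemF : ∀ X ∈ Cyl Ω ∩ {X : E n × ℝ | ‖X.1 - Y.1‖ = K * rin ∧ |X.2 - Y.2| < rin ^ 2},
      -u X ≤ F := by
    intro X hX
    refine le_trans (le_max_left _ _) (le_csSup hbdd ⟨X, hX, rfl⟩)
  -- main pointwise claim
  have claim : ∀ X ∈ Cyl Ω, ‖X.1 - Y.1‖ = K * rtar → |X.2 - Y.2| < rtar ^ 2 →
      -u X ≤ Θ * F := by
    intro X hXQ hXsp hXt
    rcases le_or_gt (X.2 - s) (-2*rin^2) with hτlow | hτ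
    · -- early vanishing region
      have hu0 : u X = 0 := by
        have h1 : X.2 ≤ s - 2*rin^2 := by linarith
        have h2 : X.2 ≤ Y.2 - ρ₀^2/4 := by nlinarith
        have := hEV X.1 (subset_closure hXQ.1) X.2 hXQ.2 h2
        simpa using this
      rw [hu0, neg_zero]
      exact mul_nonneg hΘ hF0
    · -- comparison argument via the minimum principle
      have hτhigh : X.2 - s < rtar^2 := by
        have := abs_lt.1 hXt
        exact this.2
      have hXt₂ : X.2 ≤ t₂ := by simp only [ht₂]; linarith
      have hXt₁ : t₁ < X.2 := by
        apply max_lt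
        · exact hXQ.2
        · linarith
      -- suffices to bound with ε-room
      have key : ∀ ε : ℝ, 0 < ε → -u X ≤ Θ * F + ε * GB y t₁ C X := by
        intro ε hε
        set L : ℝ := ‖X.1 - y‖ + 1 + Real.sqrt (max M 0 / ε) with hL
        have hs0 : 0 ≤ Real.sqrt (max M 0 / ε) := Real.sqrt_nonneg _
        have hnn : 0 ≤ ‖X.1 - y‖ := norm_nonneg _
        have hL1 : dist X.1 y < L := by
          rw [dist_eq_norm]
          simp only [hL]; linarith
        have hLsq : max M 0 ≤ ε * L^2 := by
          have h1 : Real.sqrt (max M 0 / ε) ≤ L := by simp only [hL]; linarith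
          have h2 : (Real.sqrt (max M 0 / ε))^2 ≤ L^2 := by
            apply pow_le_pow_left₀ hs0 h1
          rw [Real.sq_sqrt (by positivity)] at h2
          calc max M 0 = ε * (max M 0 / ε) := by field_simp
          _ ≤ ε * L^2 := by
              apply mul_le_mul_of_nonneg_left h2 (le_of_lt hε)
        set U : Set (E n) := {z | K*rin < dist z y} with hU
        have hUopen : IsOpen U :=
          isOpen_lt continuous_const (continuous_id.dist continuous_const)
        have hUclos : closure U ⊆ {z | K*rin ≤ dist z y} := by
          apply closure_minimal
          · intro z hz
            rw [hU, Set.mem_setOf_eq] at hz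
            exact le_of_lt hz
          · exact isClosed_le continuous_const (continuous_id.dist continuous_const)
        set W : Set (E n) := (Ω ∩ U) ∩ ball y L with hW
        have hWopen : IsOpen W := ((hΩo.inter hUopen).inter isOpen_ball)
        have hWb : Bornology.IsBounded W :=
          Metric.isBounded_ball.subset inter_subset_right
        have hWΩ : W ⊆ Ω := fun z hz => hz.1.1
        have hWclosΩ : closure W ⊆ closure Ω :=
          closure_mono (fun z hz => hz.1.1)
        have hWclosU : closure W ⊆ {z | K*rin ≤ dist z y} :=
          le_trans (closure_mono (fun z hz => hz.1.2)) hUclos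
        have hWsub : W ×ˢ Ioc t₁ t₂ ⊆ Cyl Ω := by
          rintro Z ⟨hz1, hz2⟩
          exact ⟨hWΩ hz1, lt_of_le_of_lt ht₁0 hz2.1⟩
        have hclosQ : closure W ×ˢ Icc t₁ t₂ ⊆ closure (Cyl Ω) := by
          rw [closure_cyl]
          rintro Z ⟨hz1, hz2⟩
          exact ⟨hWclosΩ hz1, le_trans ht₁0 hz2.1⟩
        -- u = 0 on the relevant part of pB
        have hCrout : ∀ Z : E n × ℝ, K*rin ≤ dist Z.1 y → Z ∉ Cr Y (ρ₀/2) := by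
          intro Z hZ hmem
          have h1 : dist Z.1 y < ρ₀/2 := mem_ball.1 hmem.1
          have : (8:ℝ)*ρ₀ ≤ K*rin := by nlinarith
          linarith
        set v : E n × ℝ → ℝ := fun Z => F * Φ Z + (ε * GB y t₁ C Z + u Z) with hv
        -- nonneg at zero-boundary points
        have hvz : ∀ Z : E n × ℝ, t₁ ≤ Z.2 → u Z = 0 → 0 ≤ v Z := by
          intro Z h1 h2
          simp only [hv, h2, add_zero]
          have hΦ0 : 0 ≤ Φ Z := le_of_lt (PhiB_pos y s β0 b A hA Z)
          have hG0 : 0 ≤ GB y t₁ C Z := GB_nonneg y t₁ C Z hC0 h1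
          have h3 := mul_nonneg hF0 hΦ0
          have h4 := mul_nonneg (le_of_lt hε) hG0
          linarith
        have key0 := min_principle a W hWopen hWb hlt v ?_ ?_ ?_ ?_ ?_ ?_
        · -- conclude at X
          have hXW : X.1 ∈ closure W := by
            apply subset_closure
            refine ⟨⟨hXQ.1, ?_⟩, mem_ball.2 hL1⟩
            show K*rin < dist X.1 y
            rw [dist_eq_norm, hXsp]
            have : K * rin < K * rtar := by
              apply mul_lt_mul_of_pos_left hrr hK0
            exact this
          have hvX := key0 X hXW ⟨le_of_lt hXt₁, hXt₂⟩
          have hΦX : Φ X ≤ Θ := by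
            have h1 : qf y X.1 = (K*rtar)^2 := by
              rw [qf_eq_norm, hXsp]
            have := hΦtar (X.2 - s) (le_of_lt hτ) (by linarith)
            simp only [hΦ, PhiB, h1]
            exact this
          simp only [hv] at hvX
          have hFΦ : F * Φ X ≤ F * Θ := mul_le_mul_of_nonneg_left hΦX hF0
          have : -u X ≤ F * Φ X + ε * GB y t₁ C X := by linarith
          calc -u X ≤ F * Φ X + ε * GB y t₁ C X := this
          _ ≤ Θ * F + ε * GB y t₁ C X := by rw [mul_comm Θ F]; linarith
        -- continuity of v
        · apply ContinuousOn.add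
          · apply ContinuousOn.mul continuousOn_const
            apply (continuousOn_PhiB y s β0 b A).mono
            rintro Z ⟨-, hz2⟩
            have := hσpos Z.2 hz2.1
            have h2 : (0:ℝ) < rin^2 := by positivity
            show Z.2 - s + b ≠ 0
            linarith
          · apply ContinuousOn.add
            · exact (continuous_const.mul (GB_continuous y t₁ C)).continuousOn
            · exact hc.mono hclosQ
        -- ellipticity
        · intro Z hZ ξ
          have h1 := (ha.2 Z (subset_closure (hWsub hZ))).1 ξ
          have h2 : 0 ≤ ν * ∑ i, ξ i ^ 2 :=
            mul_nonneg (le_of_lt hν) (Finset.sum_nonneg fun i _ => sq_nonneg _)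
          linarith
        -- smoothness
        · intro Z hZ
          have hu := hsol.1 Z (hWsub hZ)
          have hσZ : Z.2 - s + b ≠ 0 := by
            have := hσpos Z.2 (le_of_lt hZ.2.1)
            have h2 : (0:ℝ) < rin^2 := by positivity
            linarith
          constructor
          · exact (contDiffAt_const.mul (contDiffAt_PhiB_slice y s β0 b A Z)).add
              ((contDiffAt_const.mul (contDiffAt_GB_slice y t₁ C Z)).add hu.1)
          · exact ((differentiableAt_PhiB_time y s β0 b A Z hσZ).const_mul F).add
              (((differentiableAt_GB_time y t₁ C Z).const_mul ε).add hu.2)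
        -- strict supersolution
        · intro Z hZ
          have hu := hsol.1 Z (hWsub hZ)
          have hσZpos : 0 < Z.2 - s + b := by
            have := hσpos Z.2 (le_of_lt hZ.2.1)
            have h2 : (0:ℝ) < rin^2 := by positivity
            linarith
          have hσZ : Z.2 - s + b ≠ 0 := ne_of_gt hσZpos
          have hD2v : ∀ i j, D2 v Z i j
              = F * D2 Φ Z i j + (ε * D2 (GB y t₁ C) Z i j + D2 u Z i j) := by
            intro i j
            have hPhisl := contDiffAt_PhiB_slice y s β0 b A Z
            have hGsl := contDiffAt_GB_slice y t₁ C Z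
            have h1 := D2_add (fun Z' => F * Φ Z')
              (fun Z' => ε * GB y t₁ C Z' + u Z') Z
              (contDiffAt_const.mul hPhisl)
              ((contDiffAt_const.mul hGsl).add hu.1) i j
            have h2 := D2_const_mul Φ F Z hPhisl i j
            have h3 := D2_add (fun Z' => ε * GB y t₁ C Z') u Z
              (contDiffAt_const.mul hGsl) hu.1 i j
            have h4 := D2_const_mul (GB y t₁ C) ε Z hGsl i j
            rw [h1, h2, h3, h4]
          have hDtv : Dt v Z = F * Dt Φ Z + (ε * Dt (GB y t₁ C) Z + Dt u Z) := by
            have h1 := Dt_add (fun Z' => F * Φ Z')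
              (fun Z' => ε * GB y t₁ C Z' + u Z') Z
              ((differentiableAt_PhiB_time y s β0 b A Z hσZ).const_mul F)
              (((differentiableAt_GB_time y t₁ C Z).const_mul ε).add hu.2)
            have h2 := Dt_const_mul Φ F Z
            have h3 := Dt_add (fun Z' => ε * GB y t₁ C Z') u Z
              ((differentiableAt_GB_time y t₁ C Z).const_mul ε) hu.2
            have h4 := Dt_const_mul (GB y t₁ C) ε Z
            rw [h1, h2, h3, h4]
          have hsumv : ∑ i, ∑ j, a Z i j * D2 v Z i j
              = F * (∑ i, ∑ j, a Z i j * D2 Φ Z i j)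
                + (ε * (∑ i, ∑ j, a Z i j * D2 (GB y t₁ C) Z i j)
                  + ∑ i, ∑ j, a Z i j * D2 u Z i j) := by
            rw [Finset.mul_sum, Finset.mul_sum, ← Finset.sum_add_distrib,
              ← Finset.sum_add_distrib]
            refine Finset.sum_congr rfl fun i _ => ?_
            rw [Finset.mul_sum, Finset.mul_sum, ← Finset.sum_add_distrib,
              ← Finset.sum_add_distrib]
            refine Finset.sum_congr rfl fun j _ => ?_
            rw [hD2v]
            ring
          have haZ := ha.2 Z (subset_closure (hWsub hZ))
          have hLPhi := LPhi_nonpos y s b A hν hβ0 hβν hA (a Z) haZ.1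
            (fun i j => haZ.2 i j) Z hσZpos
          have hLG := LG_le y t₁ hν (a Z) (fun i j => haZ.2 i j) Z
          have hLu : (∑ i, ∑ j, a Z i j * D2 u Z i j) - Dt u Z = 0 := hsol.2 Z (hWsub hZ)
          rw [hsumv, hDtv]
          rw [← hC] at hLG
          rw [← hΦ] at hLPhi
          have h5 : F * ((∑ i, ∑ j, a Z i j * D2 Φ Z i j) - Dt Φ Z) ≤ 0 := by
            have := mul_le_mul_of_nonneg_left hLPhi hF0
            simpa using this
          have h6 : ε * ((∑ i, ∑ j, a Z i j * D2 (GB y t₁ C) Z i j) - Dt (GB y t₁ C) Z)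
              ≤ ε * (-1) := mul_le_mul_of_nonneg_left hLG (le_of_lt hε)
          rw [mul_sub] at h5 h6
          have h7 : ε * (-1) = -ε := by ring
          rw [h7] at h6
          linarith
        -- lateral boundary
        · intro Z hZ1 hZ2
          have hfr := frontier_inter_subset (Ω ∩ U) (ball y L) hZ1
          rcases hfr with ⟨hzf, -⟩ | ⟨hzc, hzb'⟩
          · -- frontier of Ω ∩ U
            have hfr2 := frontier_inter_subset Ω U hzf
            rcases hfr2 with ⟨hzΩ, hzU⟩ | ⟨hzΩc, hzUf⟩
            · -- frontier of Ω : u vanishes there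
              have hdist : K*rin ≤ dist Z.1 y := hUclos hzU
              rcases eq_or_lt_of_le hZ2.1 with h0 | h0
              · -- bottom time: t = t₁
                rcases eq_or_lt_of_le ht₁0 with ht10 | ht10
                · -- t₁ = 0 : parabolic bottom
                  apply hvz Z hZ2.1
                  apply hz
                  refine ⟨Or.inr ⟨frontier_subset_closure hzΩ, ?_⟩, hCrout Z hdist⟩
                  simp only [← h0, ← ht10]
                  rfl
                · -- t₁ > 0 : early vanishing
                  apply hvz Z hZ2.1
                  have ht₁eq : t₁ = s - 2*rin^2 := by
                    rcases max_choice 0 (s - 2*rin^2) with hh | hh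
                    · rw [← ht₁] at hh; linarith [hh ▸ ht10]
                    · rw [← ht₁] at hh; exact hh
                  have hZ2eq : Z.2 = s - 2*rin^2 := by rw [← h0, ht₁eq]
                  have := hEV Z.1 (frontier_subset_closure hzΩ) Z.2
                    (by rw [← h0]; exact ht10) (by rw [hZ2eq]; nlinarith)
                  simpa using this
              · -- t > t₁ ≥ 0 : lateral pB
                apply hvz Z hZ2.1
                apply hz
                refine ⟨Or.inl ⟨hzΩ, lt_of_le_of_lt ht₁0 h0⟩, hCrout Z hdist⟩
            · -- frontier of U : the inner sphere
              have hzUeq : dist Z.1 y = K*rin := by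
                have h1 : Z.1 ∈ closure U := frontier_subset_closure hzUf
                have h2 : Z.1 ∉ U := by
                  have : frontier U ∩ U = ∅ := by
                    rw [hUopen.frontier_eq]
                    ext z; simp +contextual [mem_diff]
                  intro hmem
                  have : Z.1 ∈ frontier U ∩ U := ⟨hzUf, hmem⟩
                  simp_all
                have h3 : K*rin ≤ dist Z.1 y := hUclos h1
                have h4 : ¬(K*rin < dist Z.1 y) := by
                  intro hlt
                  exact h2 (by rw [hU, Set.mem_setOf_eq]; exact hlt)
                exact le_antisymm (not_lt.1 h4) h3
              -- z in closure Ω : split into Ω or frontier Ω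
              rcases eq_or_lt_of_le hZ2.1 with h0 | h0
              · -- bottom time
                rcases eq_or_lt_of_le ht₁0 with ht10 | ht10
                · apply hvz Z hZ2.1
                  apply hz
                  refine ⟨Or.inr ⟨hzΩc, ?_⟩, hCrout Z (le_of_eq hzUeq.symm)⟩
                  simp only [← h0, ← ht10]
                  rfl
                · apply hvz Z hZ2.1
                  have ht₁eq : t₁ = s - 2*rin^2 := by
                    rcases max_choice 0 (s - 2*rin^2) with hh | hh
                    · rw [← ht₁] at hh; linarith [hh ▸ ht10]
                    · rw [← ht₁] at hh; exact hh
                  have hZ2eq : Z.2 = s - 2*rin^2 := by rw [← h0, ht₁eq]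
                  have := hEV Z.1 hzΩc Z.2 (by rw [← h0]; exact ht10)
                    (by rw [hZ2eq]; nlinarith)
                  simpa using this
              · -- t > t₁
                have hZt0 : 0 < Z.2 := lt_of_le_of_lt ht₁0 h0
                have hzcases : Z.1 ∈ Ω ∨ Z.1 ∈ frontier Ω := by
                  rcases em (Z.1 ∈ Ω) with h | h
                  · exact Or.inl h
                  · exact Or.inr ⟨hzΩc, by rwa [hΩo.interior_eq]⟩
                rcases hzcases with hzΩ | hzfr
                · -- interior point on the sphere: use the data
                  set τ := Z.2 - s with hτdef
                  rcases le_or_gt τ (-rin^2) with hcase | hcase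
                  · -- early vanishing
                    apply hvz Z hZ2.1
                    have := hEV Z.1 (subset_closure hzΩ) Z.2 hZt0
                      (by simp only [hτdef] at hcase; nlinarith)
                    simpa using this
                  rcases lt_or_ge τ (rin^2) with hcase2 | hcase2
                  · -- the data sphere S_rin
                    have hmem : Z ∈ Cyl Ω ∩ {X : E n × ℝ | ‖X.1 - Y.1‖ = K * rin
                        ∧ |X.2 - Y.2| < rin ^ 2} := by
                      refine ⟨⟨hzΩ, hZt0⟩, ?_, ?_⟩
                      · rw [← dist_eq_norm]; exact hzUeq
                      · rw [abs_lt]; constructor <;> [linarith; linarith]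
                    have h1 := hmemF Z hmem
                    have hΦ1 : 1 ≤ Φ Z := by
                      have hq : qf y Z.1 = (K*rin)^2 := by
                        rw [qf_eq_norm, ← dist_eq_norm, hzUeq]
                      have := hΦinner τ (by rw [abs_le]; constructor <;> linarith)
                      simp only [hΦ, PhiB, hq]
                      exact this
                    have hG0 : 0 ≤ GB y t₁ C Z := GB_nonneg y t₁ C Z hC0 hZ2.1
                    simp only [hv]
                    have hFΦ : F * 1 ≤ F * Φ Z := mul_le_mul_of_nonneg_left hΦ1 hF0
                    rw [mul_one] at hFΦ
                    have h4 := mul_nonneg (le_of_lt hε) hG0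
                    linarith
                  · -- positivity region
                    have hupos : 0 ≤ u Z := by
                      apply hpos Z ⟨hzΩ, hZt0⟩
                      · rw [← dist_eq_norm, hzUeq, ← hτdef]
                        apply mul_le_mul_of_nonneg_left _ (le_of_lt hK0)
                        have : rin = Real.sqrt (rin^2) := by
                          rw [Real.sqrt_sq (le_of_lt hrin0)]
                        rw [this]
                        exact Real.sqrt_le_sqrt hcase2
                      · rw [← hτdef]
                        calc ρ₀ ≤ rin := hrin
                        _ = Real.sqrt (rin^2) := (Real.sqrt_sq (le_of_lt hrin0)).symm
                        _ ≤ Real.sqrt τ := Real.sqrt_le_sqrt hcase2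
                      · rw [← hτdef]
                        have hτle : τ ≤ rtar^2 := by
                          have := hZ2.2
                          simp only [ht₂] at this
                          simp only [hτdef]
                          linarith
                        calc Real.sqrt τ ≤ Real.sqrt (rtar^2) := Real.sqrt_le_sqrt hτle
                        _ = rtar := Real.sqrt_sq (le_of_lt hrtar0)
                        _ ≤ R := hrR
                    have hΦ0 : 0 ≤ Φ Z := le_of_lt (PhiB_pos y s β0 b A hA Z)
                    have hG0 : 0 ≤ GB y t₁ C Z := GB_nonneg y t₁ C Z hC0 hZ2.1
                    simp only [hv]
                    have h3 := mul_nonneg hF0 hΦ0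
                    have h4 := mul_nonneg (le_of_lt hε) hG0
                    linarith
                · -- frontier point: pB
                  apply hvz Z hZ2.1
                  apply hz
                  refine ⟨Or.inl ⟨hzfr, hZt0⟩, hCrout Z (le_of_eq hzUeq.symm)⟩
          · -- the big sphere
            have hdist : dist Z.1 y = L := by
              have hfe : frontier (ball y L) = closure (ball y L) \ ball y L :=
                isOpen_ball.frontier_eq
              rw [hfe] at hzb'
              have := Metric.closure_ball_subset_closedBall hzb'.1
              exact le_antisymm (mem_closedBall.1 this)
                (not_lt.1 fun hlt => hzb'.2 (mem_ball.2 hlt))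
            have hZQ : Z ∈ closure (Cyl Ω) := by
              rw [closure_cyl]
              exact ⟨closure_mono inter_subset_left hzc, le_trans ht₁0 hZ2.1⟩
            have hwM := hM Z hZQ
            have hG : L^2 ≤ GB y t₁ C Z := by
              have h1 : qf y Z.1 = ‖Z.1 - y‖^2 := qf_eq_norm y Z.1
              have h2 : ‖Z.1 - y‖ = dist Z.1 y := (dist_eq_norm Z.1 y).symm
              have h3 : 0 ≤ C * (Z.2 - t₁) := mul_nonneg hC0 (by linarith [hZ2.1])
              simp only [GB]
              rw [h1, h2, hdist]
              linarith
            have hMG : max M 0 ≤ ε * GB y t₁ C Z :=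
              le_trans hLsq (mul_le_mul_of_nonneg_left hG (le_of_lt hε))
            have habs : -u Z ≤ M := by
              have := abs_le.1 hwM
              linarith [this.1]
            have hΦ0 : 0 ≤ Φ Z := le_of_lt (PhiB_pos y s β0 b A hA Z)
            simp only [hv]
            have hM0 : M ≤ max M 0 := le_max_left _ _
            have h3 := mul_nonneg hF0 hΦ0
            linarith
        · -- bottom
          intro Z hZ1 hZ2
          have hdist : K*rin ≤ dist Z.1 y :=
            hWclosU hZ1
          rcases eq_or_lt_of_le ht₁0 with ht10 | ht10
          · apply hvz Z (le_of_eq hZ2.symm)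
            apply hz
            refine ⟨Or.inr ⟨hWclosΩ hZ1, ?_⟩, hCrout Z hdist⟩
            simp only [hZ2, ← ht10]
            rfl
          · apply hvz Z (le_of_eq hZ2.symm)
            have ht₁eq : t₁ = s - 2*rin^2 := by
              rcases max_choice 0 (s - 2*rin^2) with hh | hh
              · rw [← ht₁] at hh; linarith [hh ▸ ht10]
              · rw [← ht₁] at hh; exact hh
            have := hEV Z.1 (hWclosΩ hZ1) Z.2 (by rw [hZ2]; exact ht10)
              (by rw [hZ2, ht₁eq]; nlinarith)
            simpa using this
      -- let ε → 0
      have hGX : 0 < GB y t₁ C X := by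
        have h1 : 0 ≤ qf y X.1 := qf_nonneg y X.1
        have h2 : 0 ≤ C * (X.2 - t₁) := mul_nonneg hC0 (by linarith)
        simp only [GB]
        linarith
      by_contra hcon
      push_neg at hcon
      set δ := (-u X - Θ * F) / (2 * GB y t₁ C X) with hδ
      have hδpos : 0 < δ := by
        apply div_pos (by linarith) (by linarith)
      have := key δ hδpos
      have heq : δ * GB y t₁ C X = (-u X - Θ * F) / 2 := by
        rw [hδ]
        field_simp
      rw [heq] at this
      linarith
  -- conclude via sSup
  apply Real.sSup_le
  · rintro w ⟨X, ⟨hX1, hX2, hX3⟩, rfl⟩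
    have := claim X hX1 hX2 hX3
    exact max_le this (mul_nonneg hΘ hF0)
  · exact mul_nonneg hΘ hF0

lemma step_inner {β K r : ℝ} (hβ : 0 < β) (hK0 : 0 ≤ K) (hr : 0 < r) :
    ∀ τ : ℝ, |τ| ≤ r^2 →
      1 ≤ Real.exp (β*K^2/2) * Real.exp ((-β/(τ + 3*r^2)) * (K*r)^2) := by
  intro τ hτ
  obtain ⟨h1, h2⟩ := abs_le.1 hτ
  set σ := τ + 3*r^2 with hσ
  clear_value σ
  have hσ1 : 2*r^2 ≤ σ := by rw [hσ]; linarith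
  have hσpos : 0 < σ := by nlinarith
  rw [← Real.exp_add]
  have key : β*(K*r)^2/σ ≤ β*K^2/2 := by
    rw [div_le_iff₀ hσpos]
    have h3 : 0 ≤ β*K^2 := mul_nonneg hβ.le (sq_nonneg K)
    have h4 : β*K^2*(2*r^2) ≤ β*K^2*σ := mul_le_mul_of_nonneg_left hσ1 h3
    calc β*(K*r)^2 = (β*K^2*(2*r^2))/2 := by ring
    _ ≤ (β*K^2*σ)/2 := by linarith
    _ = β*K^2/2*σ := by ring
  have hrw : (-β/σ)*(K*r)^2 = -(β*(K*r)^2/σ) := by ring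
  have : 0 ≤ β*K^2/2 + (-β/σ)*(K*r)^2 := by rw [hrw]; linarith
  exact Real.one_le_exp this

lemma step_tar {β K r : ℝ} (hβ : 0 < β) (hK0 : 0 ≤ K) (hr : 0 < r) :
    ∀ τ : ℝ, -2*r^2 ≤ τ → τ ≤ (2*r)^2 →
      Real.exp (β*K^2/2) * Real.exp ((-β/(τ + 3*r^2)) * (K*(2*r))^2)
        ≤ Real.exp (-(β*K^2)/14) := by
  intro τ h1 h2
  set σ := τ + 3*r^2 with hσ
  clear_value σ
  have hσ1 : r^2 ≤ σ := by rw [hσ]; linarith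
  have hσ2 : σ ≤ 7*r^2 := by rw [hσ]; nlinarith
  have hσpos : 0 < σ := by nlinarith
  rw [← Real.exp_add]
  apply Real.exp_le_exp.2
  have key : β*K^2/2 + β*K^2/14 ≤ β*(K*(2*r))^2/σ := by
    rw [le_div_iff₀ hσpos]
    have h3 : 0 ≤ β*K^2 := mul_nonneg hβ.le (sq_nonneg K)
    have h4 : β*K^2*σ ≤ β*K^2*(7*r^2) := mul_le_mul_of_nonneg_left hσ2 h3
    calc (β*K^2/2 + β*K^2/14)*σ = (4/7)*(β*K^2*σ) := by ring
    _ ≤ (4/7)*(β*K^2*(7*r^2)) := by linarith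
    _ = β*(K*(2*r))^2 := by ring
  have hrw : (-β/σ)*(K*(2*r))^2 = -(β*(K*(2*r))^2/σ) := by ring
  rw [hrw]
  linarith

-- dyadic index
lemma dyadic_exists {ρ₀ ρ : ℝ} (h0 : 0 < ρ₀) (h : ρ₀ ≤ ρ) :
    ∃ N : ℕ, 2^N * ρ₀ ≤ ρ ∧ ρ < 2^(N+1) * ρ₀ := by
  have hx1 : 1 ≤ ρ/ρ₀ := (one_le_div h0).2 h
  have hxpos : 0 < ρ/ρ₀ := by linarith
  set N := ⌊Real.logb 2 (ρ/ρ₀)⌋₊ with hN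
  have hlog0 : 0 ≤ Real.logb 2 (ρ/ρ₀) := Real.logb_nonneg (by norm_num) hx1
  refine ⟨N, ?_, ?_⟩
  · have h1 : (N:ℝ) ≤ Real.logb 2 (ρ/ρ₀) := Nat.floor_le hlog0
    have h2 : (2:ℝ)^(N:ℝ) ≤ (2:ℝ)^(Real.logb 2 (ρ/ρ₀)) :=
      Real.rpow_le_rpow_left_iff (by norm_num : (1:ℝ) < 2) |>.2 h1
    rw [Real.rpow_logb (by norm_num) (by norm_num) hxpos] at h2
    rw [Real.rpow_natCast] at h2
    calc (2:ℝ)^N * ρ₀ ≤ (ρ/ρ₀) * ρ₀ := by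
          apply mul_le_mul_of_nonneg_right h2 (le_of_lt h0)
    _ = ρ := by field_simp
  · have h1 : Real.logb 2 (ρ/ρ₀) < (N:ℝ) + 1 := Nat.lt_floor_add_one _
    have h2 : (2:ℝ)^(Real.logb 2 (ρ/ρ₀)) < (2:ℝ)^((N:ℝ)+1) :=
      Real.rpow_lt_rpow_left_iff (by norm_num : (1:ℝ) < 2) |>.2 h1
    rw [Real.rpow_logb (by norm_num) (by norm_num) hxpos] at h2
    have h3 : ((N:ℝ)+1) = ((N+1 : ℕ) : ℝ) := by push_cast; ring
    rw [h3, Real.rpow_natCast] at h2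
    calc ρ = (ρ/ρ₀) * ρ₀ := by field_simp
    _ < 2^(N+1) * ρ₀ := by
        apply mul_lt_mul_of_pos_right h2 h0

lemma theta_pow_le {γ₂ ρ₀ ρ : ℝ} (hγ : 0 < γ₂) (h0 : 0 < ρ₀) (hρ : 0 < ρ)
    {N : ℕ} (hN : ρ < 2^(N+1) * ρ₀) :
    ((2:ℝ)^(-γ₂))^N ≤ (2*ρ₀/ρ)^γ₂ := by
  have hb : (2:ℝ)^(-(N:ℝ)) ≤ 2*ρ₀/ρ := by
    have h1 : (2:ℝ)^(-(N:ℝ)) = 2*ρ₀/(2^(N+1) * ρ₀) := by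
      rw [Real.rpow_neg (by norm_num), Real.rpow_natCast]
      field_simp
      ring
    rw [h1]
    apply div_le_div_of_nonneg_left (by linarith) hρ (le_of_lt hN)
  have h2 : ((2:ℝ)^(-(N:ℝ)))^γ₂ ≤ (2*ρ₀/ρ)^γ₂ := by
    apply Real.rpow_le_rpow (Real.rpow_nonneg (by norm_num) _) hb (le_of_lt hγ)
  calc ((2:ℝ)^(-γ₂))^N = ((2:ℝ)^(-γ₂))^((N:ℕ):ℝ) := by rw [Real.rpow_natCast]
  _ = (2:ℝ)^((-γ₂) * (N:ℝ)) := by rw [← Real.rpow_mul (by norm_num)]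
  _ = (2:ℝ)^((-(N:ℝ)) * γ₂) := by ring_nf
  _ = ((2:ℝ)^(-(N:ℝ)))^γ₂ := by rw [← Real.rpow_mul (by norm_num)]
  _ ≤ _ := h2

/-- **Lemma 4.4**: let `u` be a bounded solution of `Lu = 0` in `Q = Ω × (0,∞)`,
continuous on `cl Q`, with `u ≥ 0` on `U'_R` and `u = 0` on `(∂_pQ) ∖ C_{ρ₀/2}(Y)`,
where `K ≥ 8`, `0 < ρ₀ ≤ R`. Then `f₂(ρ) = sup_{S_ρ} u⁻`, where
`S_ρ = Q ∩ {|x−y| = Kρ, |t−s| < ρ²}`, satisfies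
`f₂(ρ) ≤ (2ρ₀/ρ)^{γ₂} f₂(ρ₀)` for `ρ₀ ≤ ρ ≤ R`, with `γ₂ = γ₂(n, ν, m, K) > 0`
and moreover `γ₂ ≥ cK` with `c = c(n, ν, m) > 0`. -/
theorem decay_lemma (n : ℕ) (hn : 0 < n) (ν : ℝ) (hν : ν ∈ Ioc (0 : ℝ) 1)
    (m : ℝ) :
    ∃ c : ℝ, 0 < c ∧
      ∀ K : ℝ, 8 ≤ K →
      ∃ γ₂ : ℝ, 0 < γ₂ ∧ c * K ≤ γ₂ ∧
      ∀ (r₀ : ℝ) (Ω : Set (E n)), IsLipschitzDomain hn Ω m r₀ →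
      ∀ (a : E n × ℝ → Fin n → Fin n → ℝ), IsParabolicCoeff ν a (closure (Cyl Ω)) →
      ∀ Y ∈ pB Ω, ∀ ρ₀ R : ℝ, 0 < ρ₀ → ρ₀ ≤ R →
      ∀ u : E n × ℝ → ℝ, SolvesL a u (Cyl Ω) →
        ContinuousOn u (closure (Cyl Ω)) →
        (∃ M : ℝ, ∀ X ∈ closure (Cyl Ω), |u X| ≤ M) →
        (∀ X ∈ Cyl Ω, ‖X.1 - Y.1‖ ≤ K * Real.sqrt (X.2 - Y.2) →
          ρ₀ ≤ Real.sqrt (X.2 - Y.2) → Real.sqrt (X.2 - Y.2) ≤ R → 0 ≤ u X) →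
        (∀ Z ∈ pB Ω \ Cr Y (ρ₀ / 2), u Z = 0) →
      ∀ ρ : ℝ, ρ₀ ≤ ρ → ρ ≤ R →
        sSup ((fun X => max (-u X) 0) ''
            (Cyl Ω ∩ {X : E n × ℝ | ‖X.1 - Y.1‖ = K * ρ ∧ |X.2 - Y.2| < ρ ^ 2})) ≤
          (2 * ρ₀ / ρ) ^ γ₂ *
            sSup ((fun X => max (-u X) 0) ''
              (Cyl Ω ∩
                {X : E n × ℝ | ‖X.1 - Y.1‖ = K * ρ₀ ∧ |X.2 - Y.2| < ρ₀ ^ 2})) := by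
  classical
  have hν0 : 0 < ν := hν.1
  have hn0 : (0:ℝ) < n := by exact_mod_cast hn
  have hlog2 : 0 < Real.log 2 := Real.log_pos (by norm_num)
  refine ⟨ν/(7*n*Real.log 2), by positivity, ?_⟩
  intro K hK
  have hK0 : 0 < K := by linarith
  set β : ℝ := ν/(4*n) with hβdef
  have hβpos : 0 < β := by positivity
  set γ₂ : ℝ := ν*K^2/(56*n*Real.log 2) with hγ₂def
  have hγ₂pos : 0 < γ₂ := by positivity
  refine ⟨γ₂, hγ₂pos, ?_, ?_⟩
  · -- c * K ≤ γ₂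
    rw [div_mul_eq_mul_div, div_le_div_iff₀ (by positivity) (by positivity)]
    have h8 : ν*K*(56*(n:ℝ)*Real.log 2) = (7*(n:ℝ)*Real.log 2*(ν*K))*8 := by ring
    have h9 : ν*K^2*(7*(n:ℝ)*Real.log 2) = (7*(n:ℝ)*Real.log 2*(ν*K))*K := by ring
    rw [h8, h9]
    apply mul_le_mul_of_nonneg_left hK
    positivity
  intro r₀ Ω hΩ a ha Y hY ρ₀ R hρ₀ hρ₀R u hsol hcont hbound hpos hzero ρ hρ₀ρ hρR
  obtain ⟨M, hM⟩ := hbound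
  have hΩo : IsOpen Ω := hΩ.1
  have hY2 : 0 ≤ Y.2 := by
    rcases hY with h | h
    · exact le_of_lt h.2
    · rw [mem_prod, mem_singleton_iff] at h
      rw [h.2]
  set θ : ℝ := Real.exp (-(β*K^2)/14) with hθdef
  have hθpos : 0 < θ := Real.exp_pos _
  have hβν' : 4*β*(n:ℝ)*ν⁻¹ ≤ 1 := by
    have : 4*β*(n:ℝ)*ν⁻¹ = 1 := by
      rw [hβdef]
      field_simp
    rw [this]
  set f : ℝ → ℝ := fun r => sSup ((fun X => max (-u X) 0) ''
      (Cyl Ω ∩ {X : E n × ℝ | ‖X.1 - Y.1‖ = K * r ∧ |X.2 - Y.2| < r ^ 2})) with hf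
  have hf0 : ∀ r, 0 ≤ f r := by
    intro r
    apply Real.sSup_nonneg
    rintro v ⟨X, -, rfl⟩
    exact le_max_right _ _
  -- single dyadic step
  have hstep : ∀ r : ℝ, ρ₀ ≤ r → 2*r ≤ R → f (2*r) ≤ θ * f r := by
    intro r h1 h2
    have hr0 : 0 < r := lt_of_lt_of_le hρ₀ h1
    exact sphereBound hν0 hΩo ha hY2 hρ₀ hK hsol hcont hM hpos hzero
      (rin := r) (rtar := 2*r) (β0 := β) (A := Real.exp (β*K^2/2)) (Θ := θ)
      h1 (by linarith) h2 (le_of_lt hβpos) hβν' (Real.exp_pos _) (le_of_lt hθpos)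
      (step_inner hβpos (le_of_lt hK0) hr0) (step_tar hβpos (le_of_lt hK0) hr0)
  -- monotonicity
  have hmono : ∀ r : ℝ, ρ₀ ≤ r → r ≤ R → f r ≤ f ρ₀ := by
    intro r h1 h2
    rcases eq_or_lt_of_le h1 with he | hlt
    · rw [← he]
    · have := sphereBound hν0 hΩo ha hY2 hρ₀ hK hsol hcont hM hpos hzero
        (rin := ρ₀) (rtar := r) (β0 := 0) (A := 1) (Θ := 1)
        (le_refl ρ₀) hlt h2 (le_refl 0) (by norm_num) (by norm_num) (by norm_num)
        (fun τ _ => by simp) (fun τ _ _ => by simp)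
      rwa [one_mul] at this
  -- iteration
  have hiter : ∀ N : ℕ, ∀ r : ℝ, ρ₀ ≤ r → r ≤ R → 2^N * ρ₀ ≤ r → r < 2^(N+1) * ρ₀ →
      f r ≤ θ^N * f ρ₀ := by
    intro N
    induction N with
    | zero =>
        intro r h1 h2 h3 h4
        simpa using hmono r h1 h2
    | succ N ih =>
        intro r h1 h2 h3 h4
        have hp : (2:ℝ) ≤ 2^(N+1) := by
          calc (2:ℝ) = 2^1 := (pow_one 2).symm
          _ ≤ 2^(N+1) := pow_le_pow_right₀ (by norm_num) (by omega)
        have hr2 : 2*ρ₀ ≤ r := by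
          calc 2*ρ₀ ≤ 2^(N+1) * ρ₀ := by
                apply mul_le_mul_of_nonneg_right hp (le_of_lt hρ₀)
          _ ≤ r := h3
        have hrρ₀ : ρ₀ ≤ r/2 := by linarith
        have h2' : 2*(r/2) ≤ R := by linarith
        have hstep' := hstep (r/2) hrρ₀ h2'
        have he : (2:ℝ)*(r/2) = r := by ring
        rw [he] at hstep'
        have hih := ih (r/2) hrρ₀ (by linarith) ?_ ?_
        · calc f r ≤ θ * f (r/2) := hstep'
          _ ≤ θ * (θ^N * f ρ₀) := by
              apply mul_le_mul_of_nonneg_left hih (le_of_lt hθpos)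
          _ = θ^(N+1) * f ρ₀ := by ring
        · rw [pow_succ] at h3
          linarith
        · rw [pow_succ] at h4
          linarith
  -- conclude
  have hρpos : 0 < ρ := lt_of_lt_of_le hρ₀ hρ₀ρ
  obtain ⟨N, hN1, hN2⟩ := dyadic_exists hρ₀ hρ₀ρ
  have hmain := hiter N ρ hρ₀ρ hρR hN1 hN2
  have hθγ : θ = (2:ℝ)^(-γ₂ : ℝ) := by
    rw [hθdef, Real.rpow_def_of_pos (by norm_num : (0:ℝ) < 2)]
    congr 1
    rw [hγ₂def, hβdef]
    field_simp
    ring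
  have hpow := theta_pow_le hγ₂pos hρ₀ hρpos hN2
  rw [← hθγ] at hpow
  show f ρ ≤ (2 * ρ₀ / ρ) ^ γ₂ * f ρ₀
  calc f ρ ≤ θ^N * f ρ₀ := hmain
  _ ≤ (2*ρ₀/ρ)^γ₂ * f ρ₀ := mul_le_mul_of_nonneg_right hpow (hf0 ρ₀)
end
end
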